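/- arXiv:1709.03719 — 5 statements merged into one kernel-verified Lean document; each statement's English description precedes it below -/
import Mathlib

section
/- Let M > 0 and let ρ be a real random variable with P(ρ ∈ [0, M]) = 1 and P(ρ > 0) > 0, and let λ > 0 satisfy λ·E(ρ²) > 1. Then the equation E(λρ²/(1 + λρθ)) = 1 has exactly one solution θ in (0, +∞). -/
/-!
For `θ ≥ 0` the integrand `λx²/(1 + λxθ)` is bounded by `λM²` on `[0, M]`, continuous in `θ`,
and strictly decreasing in `θ` wherever `x > 0`; since `ρ > 0` with positive probability, the
expectation `F(θ)` is continuous and strictly decreasing on `[0, ∞)`. It starts at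
`F(0) = λ E(ρ²) > 1` and satisfies `F(θ) ≤ E(ρ)/θ ≤ M/θ`, so `F(2M) ≤ 1/2`. The intermediate value
theorem gives a root in `(0, 2M)` and strict monotonicity makes it unique.
-/

open MeasureTheory Set

theorem integral_lt_integral_of_ae_le_of_forall_mem_lt {α : Type*} [MeasurableSpace α]
    {μ : Measure α} {f g : α → ℝ} {s : Set α} (hf : Integrable f μ) (hg : Integrable g μ)
    (hle : f ≤ᵐ[μ] g) (hlt : ∀ x ∈ s, f x < g x) (hs : 0 < μ s) :
    ∫ x, f x ∂μ < ∫ x, g x ∂μ := by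
  rw [← sub_pos, ← integral_sub hg hf,
    integral_pos_iff_support_of_nonneg_ae (hle.mono fun x hx ↦ sub_nonneg.2 hx) (hg.sub hf)]
  exact hs.trans_le (measure_mono fun x hx ↦ (sub_pos.2 (hlt x hx)).ne')

noncomputable section

def weight (lam θ x : ℝ) : ℝ := lam * x ^ 2 / (1 + lam * x * θ)

def meanWeight (μ : Measure ℝ) (lam θ : ℝ) : ℝ := ∫ x, weight lam θ x ∂μ

end

section Pointwise

variable {lam θ θ₁ θ₂ x M : ℝ}

theorem one_le_one_add_mul (hlam : 0 ≤ lam) (hx : 0 ≤ x) (hθ : 0 ≤ θ) :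
    1 ≤ 1 + lam * x * θ :=
  le_add_of_nonneg_right (by positivity)

theorem weight_nonneg (hlam : 0 ≤ lam) (hx : 0 ≤ x) (hθ : 0 ≤ θ) : 0 ≤ weight lam θ x :=
  div_nonneg (by positivity) (zero_le_one.trans (one_le_one_add_mul hlam hx hθ))

theorem weight_le (hlam : 0 ≤ lam) (hx : x ∈ Icc 0 M) (hθ : 0 ≤ θ) :
    weight lam θ x ≤ lam * M ^ 2 :=
  calc weight lam θ x ≤ lam * x ^ 2 / 1 :=
        div_le_div_of_nonneg_left (by positivity) one_pos (one_le_one_add_mul hlam hx.1 hθ)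
    _ ≤ lam * M ^ 2 := by
        rw [div_one]
        exact mul_le_mul_of_nonneg_left (pow_le_pow_left₀ hx.1 hx.2 2) hlam

theorem weight_le_div (hlam : 0 ≤ lam) (hx : 0 ≤ x) (hθ : 0 < θ) : weight lam θ x ≤ x / θ := by
  unfold weight
  rw [div_le_div_iff₀ (by positivity) hθ]
  nlinarith [mul_nonneg hlam (sq_nonneg x), mul_nonneg hx hθ.le]

theorem weight_anti (hlam : 0 ≤ lam) (hx : 0 ≤ x) (hθ₁ : 0 ≤ θ₁) (h : θ₁ ≤ θ₂) :
    weight lam θ₂ x ≤ weight lam θ₁ x :=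
  div_le_div_of_nonneg_left (by positivity) (by linarith [one_le_one_add_mul hlam hx hθ₁])
    (by gcongr)

theorem weight_strictAnti (hlam : 0 < lam) (hx : 0 < x) (hθ₁ : 0 ≤ θ₁) (h : θ₁ < θ₂) :
    weight lam θ₂ x < weight lam θ₁ x :=
  div_lt_div_of_pos_left (by positivity) (by linarith [one_le_one_add_mul hlam.le hx.le hθ₁])
    (by gcongr)

end Pointwise

section Integral

variable {μ : Measure ℝ} [IsFiniteMeasure μ] {M lam θ : ℝ}

theorem integrable_weight (hsupp : ∀ᵐ x ∂μ, x ∈ Icc 0 M) (hlam : 0 ≤ lam) (hθ : 0 ≤ θ) :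
    Integrable (weight lam θ) μ := by
  refine .of_bound (Measurable.aestronglyMeasurable (by unfold weight; fun_prop)) (lam * M ^ 2) ?_
  filter_upwards [hsupp] with x hx
  rw [Real.norm_of_nonneg (weight_nonneg hlam hx.1 hθ)]
  exact weight_le hlam hx hθ

theorem meanWeight_zero (μ : Measure ℝ) (lam : ℝ) :
    meanWeight μ lam 0 = lam * ∫ x, x ^ 2 ∂μ := by
  simp [meanWeight, weight, integral_const_mul]

theorem meanWeight_le (hsupp : ∀ᵐ x ∂μ, x ∈ Icc 0 M) (hlam : 0 ≤ lam) (hθ : 0 < θ) :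
    meanWeight μ lam θ ≤ μ.real univ * (M / θ) := by
  rw [← smul_eq_mul, ← integral_const]
  refine integral_mono_ae (integrable_weight hsupp hlam hθ.le) (integrable_const _) ?_
  filter_upwards [hsupp] with x hx
  exact (weight_le_div hlam hx.1 hθ).trans (by gcongr; exact hx.2)

theorem strictAntiOn_meanWeight (hsupp : ∀ᵐ x ∂μ, x ∈ Icc 0 M) (hpos : 0 < μ (Ioi 0))
    (hlam : 0 < lam) : StrictAntiOn (meanWeight μ lam) (Ici 0) := fun _ hθ₁ _ hθ₂ h ↦
  integral_lt_integral_of_ae_le_of_forall_mem_lt (integrable_weight hsupp hlam.le hθ₂)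
    (integrable_weight hsupp hlam.le hθ₁)
    (hsupp.mono fun _ hx ↦ weight_anti hlam.le hx.1 hθ₁ h.le)
    (fun _ hx ↦ weight_strictAnti hlam hx hθ₁ h) hpos

theorem continuousOn_meanWeight (hsupp : ∀ᵐ x ∂μ, x ∈ Icc 0 M) (hlam : 0 ≤ lam) :
    ContinuousOn (meanWeight μ lam) (Ici 0) := by
  refine continuousOn_of_dominated (bound := fun _ ↦ lam * M ^ 2)
    (fun θ hθ ↦ (integrable_weight hsupp hlam hθ).aestronglyMeasurable)
    (fun θ hθ ↦ ?_) (integrable_const _) ?_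
  · filter_upwards [hsupp] with x hx
    rw [Real.norm_of_nonneg (weight_nonneg hlam hx.1 hθ)]
    exact weight_le hlam hx hθ
  · filter_upwards [hsupp] with x hx
    exact continuousOn_const.div (by fun_prop)
      fun θ hθ ↦ (zero_lt_one.trans_le (one_le_one_add_mul hlam hx.1 hθ)).ne'

end Integral

/-- Let `M > 0` and let `ρ` be a real random variable (with law `μ`) such that
`P(ρ ∈ [0, M]) = 1` and `P(ρ > 0) > 0`, and let `λ > 0` satisfy `λ·E(ρ²) > 1`.  Then the
equation `E(λρ²/(1 + λρθ)) = 1` has exactly one solution `θ` in `(0, +∞)`. -/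
theorem exists_unique_theta (M : ℝ) (hM : 0 < M) (μ : Measure ℝ) [IsProbabilityMeasure μ]
    (hμM : μ (Set.Icc (0 : ℝ) M) = 1) (hμpos : 0 < μ (Set.Ioi (0 : ℝ)))
    (lam : ℝ) (hlam : 0 < lam) (hsup : 1 < lam * ∫ x, x ^ 2 ∂μ) :
    ∃! θ : ℝ, 0 < θ ∧ ∫ x, lam * x ^ 2 / (1 + lam * x * θ) ∂μ = 1 := by
  have hsupp : ∀ᵐ x ∂μ, x ∈ Icc 0 M := (mem_ae_iff_prob_eq_one measurableSet_Icc).2 hμM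
  have hanti := strictAntiOn_meanWeight hsupp hμpos hlam
  have hstart : 1 < meanWeight μ lam 0 := by rwa [meanWeight_zero]
  have hend : meanWeight μ lam (2 * M) < 1 := by
    have := meanWeight_le hsupp hlam.le (by positivity : 0 < 2 * M)
    rw [probReal_univ, one_mul, div_mul_cancel_right₀ hM.ne'] at this
    linarith
  obtain ⟨θ, hθ, hroot⟩ : (1 : ℝ) ∈ meanWeight μ lam '' Ioo 0 (2 * M) :=
    intermediate_value_Ioo' (by positivity)
      ((continuousOn_meanWeight hsupp hlam.le).mono Icc_subset_Ici_self) ⟨hend, hstart⟩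
  refine ⟨θ, ⟨hθ.1, hroot⟩, fun θ' ⟨hθ', hroot'⟩ ↦ ?_⟩
  exact hanti.injOn (mem_Ici.2 hθ'.le) (mem_Ici.2 hθ.1.le) (hroot'.trans hroot.symm)
end

section
/- Fix M > 0, a real random variable ρ with P(ρ ∈ [0, M]) = 1 and P(ρ > 0) > 0, and λ > 0 with λ·E(ρ²) > 1; let θ be the unique positive solution of E(λρ²/(1 + λρθ)) = 1. For m ≥ 1 set ρ_m = ρ·1_{{ρ ≥ 1/m}}. Then for all sufficiently large m one has λ·E(ρ_m²) > 1, and, letting θ_m denote the unique positive solution of E(λρ_m²/(1 + λρ_m θ_m)) = 1, one has lim_{m→∞} θ_m = θ. -/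
/-!
Write `G(t) = E[λρ²/(1 + λρt)]` and `Gₘ` for the same expectation with `ρₘ` in place of `ρ`.
Both are nonincreasing in `t ≥ 0`, and `G` is strictly decreasing because `ρ > 0` with positive
probability. Since `ρₘ = ρ` for all large `m` pointwise and everything is bounded by `λM²`,
dominated convergence gives `Gₘ(t) → G(t)` for each `t ≥ 0`, and likewise `E ρₘ² → E ρ²`.
Hence for `t < θ < t'` eventually `Gₘ(t') < 1 = Gₘ(θₘ) < Gₘ(t)`, which traps `θₘ` in `(t, t')`.
-/

open MeasureTheory Filter Set Topology

theorem integral_lt_integral_of_ae_le_of_measure_pos {α : Type*} [MeasurableSpace α]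
    {μ : Measure α} {f g : α → ℝ} (hf : Integrable f μ) (hg : Integrable g μ) (hfg : f ≤ᵐ[μ] g)
    (hlt : 0 < μ {x | f x < g x}) : ∫ x, f x ∂μ < ∫ x, g x ∂μ := by
  rw [← sub_pos, ← integral_sub hg hf, integral_pos_iff_support_of_nonneg_ae
    (hfg.mono fun x => sub_nonneg.2) (hg.sub hf)]
  exact hlt.trans_le (measure_mono fun x hx => (sub_pos.2 hx).ne')

section RootConvergence

variable {G : ℝ → ℝ} {Gm : ℕ → ℝ → ℝ} {s : Set ℝ} {θ : ℝ} {θm : ℕ → ℝ}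

theorem eventually_lt_of_strictAntiOn (hG : StrictAntiOn G s) (hGm : ∀ m, AntitoneOn (Gm m) s)
    (hθ : θ ∈ s) {b : ℝ} (hb : b ∈ s) (hθb : θ < b)
    (hconv : Tendsto (fun m => Gm m b) atTop (𝓝 (G b)))
    (hθm : ∀ᶠ m in atTop, θm m ∈ s ∧ Gm m (θm m) = G θ) :
    ∀ᶠ m in atTop, θm m < b := by
  filter_upwards [hconv.eventually (eventually_lt_nhds (hG hθ hb hθb)), hθm]
    with m hm ⟨hθms, hroot⟩
  by_contra! hle
  exact (hroot ▸ hm).not_ge (hGm m hb hθms hle)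

theorem eventually_gt_of_strictAntiOn (hG : StrictAntiOn G s) (hGm : ∀ m, AntitoneOn (Gm m) s)
    (hθ : θ ∈ s) {a : ℝ} (ha : a ∈ s) (haθ : a < θ)
    (hconv : Tendsto (fun m => Gm m a) atTop (𝓝 (G a)))
    (hθm : ∀ᶠ m in atTop, θm m ∈ s ∧ Gm m (θm m) = G θ) :
    ∀ᶠ m in atTop, a < θm m := by
  filter_upwards [hconv.eventually (eventually_gt_nhds (hG ha hθ haθ)), hθm]
    with m hm ⟨hθms, hroot⟩
  by_contra! hle
  exact (hroot ▸ hm).not_ge (hGm m hθms ha hle)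

theorem tendsto_of_strictAntiOn_of_tendsto (hs : s ∈ 𝓝 θ) (hG : StrictAntiOn G s)
    (hGm : ∀ m, AntitoneOn (Gm m) s)
    (hconv : ∀ t ∈ s, Tendsto (fun m => Gm m t) atTop (𝓝 (G t)))
    (hθm : ∀ᶠ m in atTop, θm m ∈ s ∧ Gm m (θm m) = G θ) :
    Tendsto θm atTop (𝓝 θ) := by
  have hθ : θ ∈ s := mem_of_mem_nhds hs
  refine tendsto_order.2 ⟨fun a haθ => ?_, fun b hθb => ?_⟩
  · obtain ⟨c, ⟨hcs, hac⟩, hcθ⟩ := Filter.nonempty_of_mem <|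
      inter_mem (nhdsWithin_le_nhds (inter_mem hs (Ioi_mem_nhds haθ)))
        (self_mem_nhdsWithin : Iio θ ∈ 𝓝[<] θ)
    exact (eventually_gt_of_strictAntiOn hG hGm hθ hcs hcθ (hconv c hcs) hθm).mono
      fun m hm => hac.trans hm
  · obtain ⟨c, ⟨hcs, hcb⟩, hθc⟩ := Filter.nonempty_of_mem <|
      inter_mem (nhdsWithin_le_nhds (inter_mem hs (Iio_mem_nhds hθb)))
        (self_mem_nhdsWithin : Ioi θ ∈ 𝓝[>] θ)
    exact (eventually_lt_of_strictAntiOn hG hGm hθ hcs hθc (hconv c hcs) hθm).mono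
      fun m hm => hm.trans hcb

end RootConvergence

noncomputable def thetaIntegrand (lam t x : ℝ) : ℝ := lam * x ^ 2 / (1 + lam * x * t)

section ThetaIntegrand

variable {lam t x : ℝ}

@[fun_prop]
theorem measurable_thetaIntegrand : Measurable (thetaIntegrand lam t) := by
  unfold thetaIntegrand
  fun_prop

theorem thetaIntegrand_le (hlam : 0 ≤ lam) (ht : 0 ≤ t) (hx : 0 ≤ x) :
    thetaIntegrand lam t x ≤ lam * x ^ 2 :=
  div_le_self (by positivity) (le_add_of_nonneg_right (by positivity))

theorem abs_thetaIntegrand_le {M : ℝ} (hlam : 0 ≤ lam) (ht : 0 ≤ t) (hx : x ∈ Icc 0 M) :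
    |thetaIntegrand lam t x| ≤ lam * M ^ 2 := by
  rw [abs_of_nonneg (by unfold thetaIntegrand; have := hx.1; positivity)]
  exact (thetaIntegrand_le hlam ht hx.1).trans
    (mul_le_mul_of_nonneg_left (pow_le_pow_left₀ hx.1 hx.2 2) hlam)

theorem antitoneOn_thetaIntegrand (hlam : 0 ≤ lam) (hx : 0 ≤ x) :
    AntitoneOn (fun t => thetaIntegrand lam t x) (Ici 0) := fun t₁ ht₁ _ _ h =>
  div_le_div_of_nonneg_left (by positivity)
    (by have : (0 : ℝ) ≤ t₁ := ht₁; positivity) (by gcongr)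

theorem strictAntiOn_thetaIntegrand (hlam : 0 < lam) (hx : 0 < x) :
    StrictAntiOn (fun t => thetaIntegrand lam t x) (Ici 0) := fun t₁ ht₁ _ _ h =>
  div_lt_div_of_pos_left (by positivity)
    (by have : (0 : ℝ) ≤ t₁ := ht₁; positivity) (by gcongr)

end ThetaIntegrand

section IntegralThetaIntegrand

variable {Ω : Type*} [MeasurableSpace Ω] {μ : Measure Ω} [IsFiniteMeasure μ] {X : Ω → ℝ}
  {M lam : ℝ}

theorem integrable_thetaIntegrand_comp (hXm : Measurable X) (hX : ∀ᵐ ω ∂μ, X ω ∈ Icc 0 M)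
    (hlam : 0 ≤ lam) {t : ℝ} (ht : 0 ≤ t) :
    Integrable (fun ω => thetaIntegrand lam t (X ω)) μ :=
  .of_bound (measurable_thetaIntegrand.comp hXm).aestronglyMeasurable (lam * M ^ 2)
    (hX.mono fun _ hω => abs_thetaIntegrand_le hlam ht hω)

theorem antitoneOn_integral_thetaIntegrand (hXm : Measurable X)
    (hX : ∀ᵐ ω ∂μ, X ω ∈ Icc 0 M) (hlam : 0 ≤ lam) :
    AntitoneOn (fun t => ∫ ω, thetaIntegrand lam t (X ω) ∂μ) (Ici 0) :=
  fun _ ht₁ _ ht₂ h => integral_mono_ae (integrable_thetaIntegrand_comp hXm hX hlam ht₂)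
    (integrable_thetaIntegrand_comp hXm hX hlam ht₁)
    (hX.mono fun _ hω => antitoneOn_thetaIntegrand hlam hω.1 ht₁ ht₂ h)

theorem strictAntiOn_integral_thetaIntegrand (hXm : Measurable X)
    (hX : ∀ᵐ ω ∂μ, X ω ∈ Icc 0 M) (hlam : 0 < lam) (hpos : 0 < μ {ω | 0 < X ω}) :
    StrictAntiOn (fun t => ∫ ω, thetaIntegrand lam t (X ω) ∂μ) (Ici 0) :=
  fun _ ht₁ _ ht₂ h => integral_lt_integral_of_ae_le_of_measure_pos
    (integrable_thetaIntegrand_comp hXm hX hlam.le ht₂)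
    (integrable_thetaIntegrand_comp hXm hX hlam.le ht₁)
    (hX.mono fun _ hω => antitoneOn_thetaIntegrand hlam.le hω.1 ht₁ ht₂ h.le)
    (hpos.trans_le (measure_mono fun _ hω => strictAntiOn_thetaIntegrand hlam hω ht₁ ht₂ h))

end IntegralThetaIntegrand

noncomputable def truncBelow (m : ℕ) (x : ℝ) : ℝ := if 1 / (m : ℝ) ≤ x then x else 0

section TruncBelow

variable {M x : ℝ}

@[fun_prop]
theorem measurable_truncBelow (m : ℕ) : Measurable (truncBelow m) :=
  Measurable.ite measurableSet_Ici measurable_id measurable_const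

theorem truncBelow_mem_Icc (m : ℕ) (hx : x ∈ Icc 0 M) : truncBelow m x ∈ Icc 0 M := by
  unfold truncBelow
  split_ifs
  exacts [hx, ⟨le_rfl, hx.1.trans hx.2⟩]

theorem eventually_truncBelow_eq (hx : 0 ≤ x) : ∀ᶠ m in atTop, truncBelow m x = x := by
  rcases hx.eq_or_lt with rfl | hx
  · exact .of_forall fun m => by simp [truncBelow]
  · filter_upwards [tendsto_one_div_atTop_nhds_zero_nat.eventually (eventually_le_nhds hx)]
      with m hm using if_pos hm

theorem tendsto_integral_comp_truncBelow {μ : Measure ℝ} [IsFiniteMeasure μ] {g : ℝ → ℝ}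
    (hg : Measurable g) {C : ℝ} (hgC : ∀ x ∈ Icc 0 M, |g x| ≤ C)
    (hμ : ∀ᵐ x ∂μ, x ∈ Icc 0 M) :
    Tendsto (fun m => ∫ x, g (truncBelow m x) ∂μ) atTop (𝓝 (∫ x, g x ∂μ)) :=
  tendsto_integral_of_dominated_convergence (fun _ => C)
    (fun m => (hg.comp (measurable_truncBelow m)).aestronglyMeasurable) (integrable_const C)
    (fun m => hμ.mono fun _ hx => hgC _ (truncBelow_mem_Icc m hx))
    (hμ.mono fun _ hx => tendsto_const_nhds.congr' <|
      (eventually_truncBelow_eq hx.1).mono fun _ hm => congrArg g hm.symm)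

end TruncBelow

theorem theta_truncation_below_limit_general (M : ℝ)
    (μ : Measure ℝ) [IsProbabilityMeasure μ]
    (hμM : μ (Set.Icc (0 : ℝ) M) = 1) (hμpos : 0 < μ (Set.Ioi (0 : ℝ)))
    (lam : ℝ) (hlam : 0 < lam) (hsup : 1 < lam * ∫ x, x ^ 2 ∂μ)
    (θ : ℝ) (hθpos : 0 < θ) (hθ : ∫ x, lam * x ^ 2 / (1 + lam * x * θ) ∂μ = 1) :
    (∀ᶠ m : ℕ in atTop,
        1 < lam * ∫ x, (if 1 / (m : ℝ) ≤ x then x else 0) ^ 2 ∂μ) ∧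
      ∀ θm : ℕ → ℝ,
        (∀ᶠ m : ℕ in atTop, 0 < θm m ∧
            ∫ x, lam * (if 1 / (m : ℝ) ≤ x then x else 0) ^ 2 /
              (1 + lam * (if 1 / (m : ℝ) ≤ x then x else 0) * θm m) ∂μ = 1) →
          Tendsto θm atTop (nhds θ) := by
  have hμM : ∀ᵐ x ∂μ, x ∈ Icc 0 M := (mem_ae_iff_prob_eq_one measurableSet_Icc).2 hμM
  refine ⟨?_, fun θm hθm => ?_⟩
  · have hsq := tendsto_integral_comp_truncBelow (measurable_id.pow_const 2) (C := M ^ 2)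
      (fun x hx => (abs_of_nonneg (sq_nonneg x)).trans_le (pow_le_pow_left₀ hx.1 hx.2 2)) hμM
    exact (hsq.const_mul lam).eventually (eventually_gt_nhds hsup)
  · refine tendsto_of_strictAntiOn_of_tendsto (Ici_mem_nhds hθpos)
      (strictAntiOn_integral_thetaIntegrand measurable_id hμM hlam hμpos)
      (fun m => antitoneOn_integral_thetaIntegrand (measurable_truncBelow m)
        (hμM.mono fun _ => truncBelow_mem_Icc m) hlam.le)
      (fun t ht => tendsto_integral_comp_truncBelow measurable_thetaIntegrand
        (fun _ => abs_thetaIntegrand_le hlam.le ht) hμM) ?_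
    filter_upwards [hθm] with m ⟨hpos, hroot⟩
    exact ⟨hpos.le, hroot.trans hθ.symm⟩

/-- Fix `M > 0`, a real random variable `ρ` (with law `μ`) with
`P(ρ ∈ [0, M]) = 1` and `P(ρ > 0) > 0`, and `λ > 0` with `λ·E(ρ²) > 1`; let `θ` be the unique
positive solution of `E(λρ²/(1 + λρθ)) = 1`.  For `m ≥ 1` set `ρ_m = ρ·1_{ρ ≥ 1/m}` (so that
`E g(ρ_m) = ∫ g(x·1_{x ≥ 1/m}) dμ(x)`).  Then for all sufficiently large `m` one has
`λ·E(ρ_m²) > 1`, and, letting `θ_m` denote the unique positive solution of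
`E(λρ_m²/(1 + λρ_m θ_m)) = 1`, one has `θ_m → θ` as `m → ∞`. -/
theorem theta_truncation_below_limit (M : ℝ) (hM : 0 < M)
    (μ : Measure ℝ) [IsProbabilityMeasure μ]
    (hμM : μ (Set.Icc (0 : ℝ) M) = 1) (hμpos : 0 < μ (Set.Ioi (0 : ℝ)))
    (lam : ℝ) (hlam : 0 < lam) (hsup : 1 < lam * ∫ x, x ^ 2 ∂μ)
    (θ : ℝ) (hθpos : 0 < θ) (hθ : ∫ x, lam * x ^ 2 / (1 + lam * x * θ) ∂μ = 1) :
    (∀ᶠ m : ℕ in atTop,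
        1 < lam * ∫ x, (if 1 / (m : ℝ) ≤ x then x else 0) ^ 2 ∂μ) ∧
      ∀ θm : ℕ → ℝ,
        (∀ᶠ m : ℕ in atTop, 0 < θm m ∧
            ∫ x, lam * (if 1 / (m : ℝ) ≤ x then x else 0) ^ 2 /
              (1 + lam * (if 1 / (m : ℝ) ≤ x then x else 0) * θm m) ∂μ = 1) →
          Tendsto θm atTop (nhds θ) :=
  theta_truncation_below_limit_general M μ hμM hμpos lam hlam hsup θ hθpos hθ
end

section
/- Fix M > 0, a real random variable ρ with P(ρ ∈ [0, M]) = 1 and P(ρ > 0) > 0, and λ > 0 with λ·E(ρ²) > 1; let θ be the unique positive solution of E(λρ²/(1 + λρθ)) = 1. For m ≥ 1 set ρ̂_m = max(ρ, 1/m). Then λ·E(ρ̂_m²) > 1 for every m, and, letting θ̂_m denote the unique positive solution of E(λρ̂_m²/(1 + λρ̂_m θ̂_m)) = 1, one has lim_{m→∞} θ̂_m = θ. -/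
/-! For `t ≥ 0` the map `t ↦ E(λρ²/(1 + λρt))` is strictly decreasing, and its truncated
analogues `t ↦ E(λρ̂_m²/(1 + λρ̂_m t))` are decreasing and converge to it pointwise by dominated
convergence, since `ρ̂_m → ρ` and everything stays in `[0, max M 1]`. Hence for `b > θ` the
truncated function is eventually below `1` at `b`, forcing `θ̂_m < b`, and symmetrically for
`a < θ`; squeezing gives `θ̂_m → θ`. -/

open MeasureTheory Filter Set Topology

noncomputable def response (lam y t : ℝ) : ℝ := lam * y ^ 2 / (1 + lam * y * t)

section Response

variable {lam y t : ℝ}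

lemma one_le_one_add_mul_s3 (hlam : 0 ≤ lam) (hy : 0 ≤ y) (ht : 0 ≤ t) : 1 ≤ 1 + lam * y * t :=
  le_add_of_nonneg_right (by positivity)

lemma response_nonneg (hlam : 0 ≤ lam) (hy : 0 ≤ y) (ht : 0 ≤ t) : 0 ≤ response lam y t :=
  div_nonneg (by positivity) (zero_le_one.trans (one_le_one_add_mul_s3 hlam hy ht))

lemma response_le (hlam : 0 ≤ lam) (hy : 0 ≤ y) (ht : 0 ≤ t) : response lam y t ≤ lam * y ^ 2 :=
  div_le_self (by positivity) (one_le_one_add_mul_s3 hlam hy ht)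

lemma response_antitoneOn (hlam : 0 ≤ lam) (hy : 0 ≤ y) :
    AntitoneOn (response lam y) (Ici 0) := fun t₁ ht₁ t₂ _ h12 =>
  div_le_div_of_nonneg_left (by positivity) (by linarith [one_le_one_add_mul_s3 hlam hy ht₁])
    (by gcongr)

lemma response_strictAntiOn (hlam : 0 < lam) (hy : 0 < y) :
    StrictAntiOn (response lam y) (Ici 0) := fun t₁ ht₁ t₂ _ h12 =>
  div_lt_div_of_pos_left (by positivity) (by linarith [one_le_one_add_mul_s3 hlam.le hy.le ht₁])
    (by gcongr)

lemma norm_response_le {B : ℝ} (hlam : 0 ≤ lam) (hy : y ∈ Icc 0 B) (ht : 0 ≤ t) :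
    ‖response lam y t‖ ≤ lam * B ^ 2 := by
  rw [Real.norm_of_nonneg (response_nonneg hlam hy.1 ht)]
  exact (response_le hlam hy.1 ht).trans (by gcongr; exacts [hy.1, hy.2])

lemma continuousAt_response (hlam : 0 ≤ lam) (hy : 0 ≤ y) (ht : 0 ≤ t) :
    ContinuousAt (fun z => response lam z t) y :=
  ContinuousAt.div (by fun_prop) (by fun_prop)
    (by linarith [one_le_one_add_mul_s3 hlam hy ht])

end Response

lemma integral_lt_integral_of_ae_le_of_measure_setOf_lt_pos {α : Type*} [MeasurableSpace α]
    {μ : Measure α} {f g : α → ℝ} (hf : Integrable f μ) (hg : Integrable g μ)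
    (hle : f ≤ᵐ[μ] g) (hlt : 0 < μ {x | f x < g x}) : ∫ x, f x ∂μ < ∫ x, g x ∂μ := by
  rw [← sub_pos, ← integral_sub hg hf, integral_pos_iff_support_of_nonneg_ae
    (hle.mono fun x => sub_nonneg.2) (hg.sub hf)]
  exact hlt.trans_le (measure_mono fun x hx => (sub_pos.2 hx).ne')

section ResponseIntegral

variable {μ : Measure ℝ} {lam B : ℝ} {f : ℝ → ℝ}

lemma integrable_sq_of_ae_mem_Icc [IsFiniteMeasure μ] (hf : Measurable f)
    (hfB : ∀ᵐ x ∂μ, f x ∈ Icc 0 B) :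
    Integrable (fun x => f x ^ 2) μ :=
  Integrable.of_bound (by fun_prop) (B ^ 2) (hfB.mono fun x hx => by
    rw [Real.norm_of_nonneg (sq_nonneg (f x))]; exact pow_le_pow_left₀ hx.1 hx.2 2)

lemma integrable_response [IsFiniteMeasure μ] (hlam : 0 ≤ lam) (hf : Measurable f)
    (hfB : ∀ᵐ x ∂μ, f x ∈ Icc 0 B) {t : ℝ} (ht : 0 ≤ t) :
    Integrable (fun x => response lam (f x) t) μ :=
  Integrable.of_bound (Measurable.aestronglyMeasurable (by unfold response; fun_prop))
    (lam * B ^ 2) (hfB.mono fun _ hx => norm_response_le hlam hx ht)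

lemma antitoneOn_integral_response [IsFiniteMeasure μ] (hlam : 0 ≤ lam) (hf : Measurable f)
    (hfB : ∀ᵐ x ∂μ, f x ∈ Icc 0 B) :
    AntitoneOn (fun t => ∫ x, response lam (f x) t ∂μ) (Ici 0) := fun _ ht₁ _ ht₂ h12 =>
  integral_mono_ae (integrable_response hlam hf hfB ht₂) (integrable_response hlam hf hfB ht₁)
    (hfB.mono fun _ hx => response_antitoneOn hlam hx.1 ht₁ ht₂ h12)

lemma strictAntiOn_integral_response [IsFiniteMeasure μ] (hlam : 0 < lam) (hf : Measurable f)
    (hfB : ∀ᵐ x ∂μ, f x ∈ Icc 0 B) (hpos : 0 < μ {x | 0 < f x}) :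
    StrictAntiOn (fun t => ∫ x, response lam (f x) t ∂μ) (Ici 0) := fun _ ht₁ _ ht₂ h12 =>
  integral_lt_integral_of_ae_le_of_measure_setOf_lt_pos
    (integrable_response hlam.le hf hfB ht₂) (integrable_response hlam.le hf hfB ht₁)
    (hfB.mono fun _ hx => response_antitoneOn hlam.le hx.1 ht₁ ht₂ h12.le)
    (hpos.trans_le (measure_mono fun _ hx => response_strictAntiOn hlam hx ht₁ ht₂ h12))

lemma tendsto_integral_response [IsFiniteMeasure μ] (hlam : 0 ≤ lam) {fs : ℕ → ℝ → ℝ}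
    (hfs : ∀ n, Measurable (fs n)) (hfsB : ∀ n, ∀ᵐ x ∂μ, fs n x ∈ Icc 0 B)
    (hf : ∀ᵐ x ∂μ, 0 ≤ f x) (hlim : ∀ᵐ x ∂μ, Tendsto (fun n => fs n x) atTop (𝓝 (f x)))
    {t : ℝ} (ht : 0 ≤ t) :
    Tendsto (fun n => ∫ x, response lam (fs n x) t ∂μ) atTop
      (𝓝 (∫ x, response lam (f x) t ∂μ)) := by
  refine tendsto_integral_of_dominated_convergence (fun _ => lam * B ^ 2)
    (fun n => (integrable_response hlam (hfs n) (hfsB n) ht).aestronglyMeasurable)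
    (integrable_const _) (fun n => (hfsB n).mono fun _ hx => norm_response_le hlam hx ht) ?_
  filter_upwards [hf, hlim] with x hx0 hx
  exact (continuousAt_response hlam hx0 ht).tendsto.comp hx

end ResponseIntegral

lemma tendsto_of_strictAntiOn_of_tendsto_antitoneOn {F : ℝ → ℝ} {Fs : ℕ → ℝ → ℝ}
    {c θ : ℝ} {θs : ℕ → ℝ} (hF : StrictAntiOn F (Ici 0))
    (hFs : ∀ n, AntitoneOn (Fs n) (Ici 0))
    (hlim : ∀ t, 0 ≤ t → Tendsto (fun n => Fs n t) atTop (𝓝 (F t)))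
    (hθ : 0 < θ) (hFθ : F θ = c) (hθs : ∀ᶠ n in atTop, 0 ≤ θs n ∧ Fs n (θs n) = c) :
    Tendsto θs atTop (𝓝 θ) := by
  refine tendsto_order.2 ⟨fun a ha => ?_, fun b hb => ?_⟩
  · have ha' : max a 0 < θ := max_lt ha hθ
    have hc : c < F (max a 0) := hFθ ▸ hF (le_max_right a 0) hθ.le ha'
    filter_upwards [(hlim _ (le_max_right a 0)).eventually_const_lt hc, hθs]
      with n hn ⟨hθn, hFn⟩
    by_contra! hle
    have := hFs n hθn (le_max_right a 0) (hle.trans (le_max_left a 0))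
    linarith
  · have hc : F b < c := hFθ ▸ hF hθ.le (hθ.trans hb).le hb
    filter_upwards [(hlim _ (hθ.trans hb).le).eventually_lt_const hc, hθs]
      with n hn ⟨hθn, hFn⟩
    by_contra! hle
    have := hFs n (hθ.trans hb).le hθn hle
    linarith

lemma max_one_div_mem_Icc {x M : ℝ} (hx : x ∈ Icc 0 M) (m : ℕ) :
    max x (1 / (m : ℝ)) ∈ Icc 0 (max M 1) :=
  ⟨hx.1.trans (le_max_left _ _),
    max_le_max hx.2 (by simpa only [one_div] using Nat.cast_inv_le_one m)⟩

lemma tendsto_max_one_div {x : ℝ} (hx : 0 ≤ x) :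
    Tendsto (fun m : ℕ => max x (1 / (m : ℝ))) atTop (𝓝 x) := by
  simpa only [max_eq_left hx] using
    (tendsto_const_nhds (x := x)).max tendsto_one_div_atTop_nhds_zero_nat

theorem theta_truncation_above_limit_general (M : ℝ)
    (μ : Measure ℝ) [IsProbabilityMeasure μ]
    (hμM : μ (Set.Icc (0 : ℝ) M) = 1) (hμpos : 0 < μ (Set.Ioi (0 : ℝ)))
    (lam : ℝ) (hlam : 0 < lam) (hsup : 1 < lam * ∫ x, x ^ 2 ∂μ)
    (θ : ℝ) (hθpos : 0 < θ) (hθ : ∫ x, lam * x ^ 2 / (1 + lam * x * θ) ∂μ = 1) :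
    (∀ m : ℕ, 1 ≤ m → 1 < lam * ∫ x, (max x (1 / (m : ℝ))) ^ 2 ∂μ) ∧
      ∀ θm : ℕ → ℝ,
        (∀ m : ℕ, 1 ≤ m → 0 < θm m ∧
            ∫ x, lam * (max x (1 / (m : ℝ))) ^ 2 /
              (1 + lam * (max x (1 / (m : ℝ))) * θm m) ∂μ = 1) →
          Tendsto θm atTop (nhds θ) := by
  have hsupp : ∀ᵐ x ∂μ, x ∈ Icc 0 M :=
    (ae_mem_iff_measure_eq measurableSet_Icc.nullMeasurableSet).2 (by rw [hμM, measure_univ])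
  have htrunc : ∀ m : ℕ, ∀ᵐ x ∂μ, max x (1 / (m : ℝ)) ∈ Icc 0 (max M 1) := fun m =>
    hsupp.mono fun _ hx => max_one_div_mem_Icc hx m
  have hmeas : ∀ m : ℕ, Measurable fun x : ℝ => max x (1 / (m : ℝ)) := fun _ => by fun_prop
  refine ⟨fun m _ => hsup.trans_le ?_, fun θm hθm => ?_⟩
  · exact mul_le_mul_of_nonneg_left (integral_mono_ae
      (integrable_sq_of_ae_mem_Icc measurable_id hsupp)
      (integrable_sq_of_ae_mem_Icc (hmeas m) (htrunc m))
      (hsupp.mono fun x hx => pow_le_pow_left₀ hx.1 (le_max_left _ _) 2)) hlam.le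
  · exact tendsto_of_strictAntiOn_of_tendsto_antitoneOn
      (strictAntiOn_integral_response hlam measurable_id hsupp hμpos)
      (fun m => antitoneOn_integral_response hlam.le (hmeas m) (htrunc m))
      (fun t ht => tendsto_integral_response hlam.le hmeas htrunc (hsupp.mono fun _ hx => hx.1)
        (hsupp.mono fun _ hx => tendsto_max_one_div hx.1) ht)
      hθpos hθ (eventually_atTop.2 ⟨1, fun m hm => ⟨(hθm m hm).1.le, (hθm m hm).2⟩⟩)

/-- Fix `M > 0`, a real random variable `ρ` (with law `μ`) with
`P(ρ ∈ [0, M]) = 1` and `P(ρ > 0) > 0`, and `λ > 0` with `λ·E(ρ²) > 1`; let `θ` be the unique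
positive solution of `E(λρ²/(1 + λρθ)) = 1`.  For `m ≥ 1` set `ρ̂_m = max(ρ, 1/m)` (so that
`E g(ρ̂_m) = ∫ g(max(x, 1/m)) dμ(x)`).  Then `λ·E(ρ̂_m²) > 1` for every `m ≥ 1`, and,
letting `θ̂_m` denote the unique positive solution of `E(λρ̂_m²/(1 + λρ̂_m θ̂_m)) = 1`,
one has `θ̂_m → θ` as `m → ∞`. -/
theorem theta_truncation_above_limit (M : ℝ) (hM : 0 < M)
    (μ : Measure ℝ) [IsProbabilityMeasure μ]
    (hμM : μ (Set.Icc (0 : ℝ) M) = 1) (hμpos : 0 < μ (Set.Ioi (0 : ℝ)))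
    (lam : ℝ) (hlam : 0 < lam) (hsup : 1 < lam * ∫ x, x ^ 2 ∂μ)
    (θ : ℝ) (hθpos : 0 < θ) (hθ : ∫ x, lam * x ^ 2 / (1 + lam * x * θ) ∂μ = 1) :
    (∀ m : ℕ, 1 ≤ m → 1 < lam * ∫ x, (max x (1 / (m : ℝ))) ^ 2 ∂μ) ∧
      ∀ θm : ℕ → ℝ,
        (∀ m : ℕ, 1 ≤ m → 0 < θm m ∧
            ∫ x, lam * (max x (1 / (m : ℝ))) ^ 2 /
              (1 + lam * (max x (1 / (m : ℝ))) * θm m) ∂μ = 1) →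
          Tendsto θm atTop (nhds θ) :=
  theta_truncation_above_limit_general M μ hμM hμpos lam hlam hsup θ hθpos hθ
end

section
/- For every d ≥ 1 and all 0 ≤ s < t ≤ M, the extinction probabilities of the branching process with random vertex weights satisfy |F_d(s) − F_d(t)| ≤ λM(t − s). -/
/-!
Couple the two processes on one probability space: start from the model with root weight `t` and
lower the root weight to `s`, keeping every clock. The lowered model has the law of the model with
root weight `s`, since its extinction event is a measurable function of an independent family with
the same marginals. The two processes can only differ if some edge `Υ ⇒ i` changes status, i.e. if
`(λ/d) s ρ(i) Y(Υ) ≤ U(Υ, i) < (λ/d) t ρ(i) Y(Υ)`. As `U(Υ, i)` is a rate-one exponential variable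
independent of `(ρ(i), Y(Υ))` and its density is at most `1`, this has probability at most
`(λ/d) (t - s) E[ρ(i) Y(Υ)] ≤ (λ/d) (t - s) M`; a union bound over the `d` children concludes.
-/

open MeasureTheory ProbabilityTheory Filter Set

noncomputable section

/-- The sets `W_n` of the branching process with vertex weights on the rooted `d`-ary tree
`𝕋^d` (vertices: finite words over `Fin d`, root: the empty word; `x ⇒ y` iff `y = x ++ [i]`).
Here `w x` is the random weight `ρ(x)`, `Y x` is the rate-one exponential recovery clock of
`x`, and `U x i` is a rate-one exponential clock so that `U x i / ((λ/d) ρ(x) ρ(x ++ [i]))`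
is the exponential infection clock of rate `(λ/d) ρ(x) ρ(x ++ [i])` along the edge
`x ⇒ x ++ [i]` (infinite when the rate vanishes).  The child `x ++ [i]` of `x ∈ W_n` lies in
`W_{n+1}` iff its infection clock rings before the recovery clock of `x`, i.e. iff
`U x i < (λ/d) ρ(x) ρ(x ++ [i]) Y x`. -/
def WSet {Ω : Type} (lam : ℝ) (d : ℕ) (w Y : List (Fin d) → Ω → ℝ)
    (U : List (Fin d) → Fin d → Ω → ℝ) (ω : Ω) : ℕ → Set (List (Fin d))
  | 0 => {([] : List (Fin d))}
  | n + 1 => {y | ∃ x ∈ WSet lam d w Y U ω n, ∃ i : Fin d,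
      y = x ++ [i] ∧ U x i ω < lam / d * (w x ω * w (x ++ [i]) ω) * Y x ω}

/-- The random environment of the branching process with random vertex weights on `𝕋^d`:
i.i.d. vertex weights with law `μ`, i.i.d. rate-one exponential recovery clocks and i.i.d.
rate-one exponential edge clocks, all jointly independent; `P̂_{λ,d}` is the (annealed)
probability measure `P`. -/
structure TreeModel {Ω : Type} [MeasurableSpace Ω] (P : Measure Ω)
    (μ : Measure ℝ) (lam : ℝ) (d : ℕ) where
  hprob : IsProbabilityMeasure P
  w : List (Fin d) → Ω → ℝ
  Y : List (Fin d) → Ω → ℝ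
  U : List (Fin d) → Fin d → Ω → ℝ
  hw : ∀ x, Measurable (w x)
  hY : ∀ x, Measurable (Y x)
  hU : ∀ x i, Measurable (U x i)
  hwlaw : ∀ x, P.map (w x) = μ
  hYlaw : ∀ x, P.map (Y x) = expMeasure 1
  hUlaw : ∀ x i, P.map (U x i) = expMeasure 1
  hIndep : iIndepFun
    (β := fun _ : List (Fin d) ⊕ List (Fin d) ⊕ List (Fin d) × Fin d => ℝ)
    (Sum.elim w (Sum.elim Y (fun p => U p.1 p.2))) P
/-- The random environment of the branching process on `𝕋^d` in which the weight of the
root is deterministically equal to `s`, all other vertex weights being i.i.d. with law `μ`;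
the recovery and edge clocks are as in `TreeModel`. -/
structure TreeModelRoot {Ω : Type} [MeasurableSpace Ω] (P : Measure Ω)
    (μ : Measure ℝ) (lam : ℝ) (d : ℕ) (s : ℝ) where
  hprob : IsProbabilityMeasure P
  w : List (Fin d) → Ω → ℝ
  Y : List (Fin d) → Ω → ℝ
  U : List (Fin d) → Fin d → Ω → ℝ
  hw : ∀ x, Measurable (w x)
  hY : ∀ x, Measurable (Y x)
  hU : ∀ x i, Measurable (U x i)
  hroot : ∀ ω, w ([] : List (Fin d)) ω = s
  hwlaw : ∀ x, x ≠ ([] : List (Fin d)) → P.map (w x) = μ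
  hYlaw : ∀ x, P.map (Y x) = expMeasure 1
  hUlaw : ∀ x i, P.map (U x i) = expMeasure 1
  hIndep : iIndepFun
    (β := fun _ : List (Fin d) ⊕ List (Fin d) ⊕ List (Fin d) × Fin d => ℝ)
    (Sum.elim w (Sum.elim Y (fun p => U p.1 p.2))) P

open scoped symmDiff

section Branching

variable {Ω : Type} {lam : ℝ} {d : ℕ}

def extinctionSet (lam : ℝ) (d : ℕ) (w Y : List (Fin d) → Ω → ℝ)
    (U : List (Fin d) → Fin d → Ω → ℝ) : Set Ω :=
  {ω | ∃ n, WSet lam d w Y U ω n = ∅}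

def clockFamily (w Y : List (Fin d) → Ω → ℝ) (U : List (Fin d) → Fin d → Ω → ℝ) :
    List (Fin d) ⊕ List (Fin d) ⊕ List (Fin d) × Fin d → Ω → ℝ :=
  Sum.elim w (Sum.elim Y fun p => U p.1 p.2)

lemma WSet_comp {Ω' : Type} (w Y : List (Fin d) → Ω' → ℝ) (U : List (Fin d) → Fin d → Ω' → ℝ)
    (g : Ω → Ω') (ω : Ω) (n : ℕ) :
    WSet lam d (fun x => w x ∘ g) (fun x => Y x ∘ g) (fun x i => U x i ∘ g) ω n =
      WSet lam d w Y U (g ω) n := by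
  induction n with
  | zero => rfl
  | succ n ih => simp only [WSet, ih]; rfl

lemma WSet_eq_of_root_edges {w w' Y : List (Fin d) → Ω → ℝ} {U : List (Fin d) → Fin d → Ω → ℝ}
    {ω : Ω} (hw : ∀ x, x ≠ [] → w' x ω = w x ω)
    (hedge : ∀ i, (U [] i ω < lam / d * (w' [] ω * w' [i] ω) * Y [] ω ↔
      U [] i ω < lam / d * (w [] ω * w [i] ω) * Y [] ω)) (n : ℕ) :
    WSet lam d w' Y U ω n = WSet lam d w Y U ω n := by
  induction n with
  | zero => rfl
  | succ n ih =>
    ext y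
    simp only [WSet, ih, mem_ofPred_eq]
    refine exists_congr fun x => and_congr_right fun _ => exists_congr fun i =>
      and_congr_right fun _ => ?_
    rcases x with _ | ⟨a, x⟩
    · exact hedge i
    · rw [hw _ (List.cons_ne_nil a x), hw _ (by simp)]

lemma measurable_mem_WSet {mΩ : MeasurableSpace Ω} {w Y : List (Fin d) → Ω → ℝ}
    {U : List (Fin d) → Fin d → Ω → ℝ} (hw : ∀ x, Measurable (w x))
    (hY : ∀ x, Measurable (Y x)) (hU : ∀ x i, Measurable (U x i)) (n : ℕ) (x : List (Fin d)) :
    Measurable fun ω => x ∈ WSet lam d w Y U ω n := by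
  induction n generalizing x with
  | zero => exact measurable_const
  | succ n ih =>
    refine Measurable.exists fun x' => (ih x').and <| Measurable.exists fun i =>
      measurable_const.and <| measurableSet_setOfPred.mp <| measurableSet_lt (hU x' i) ?_
    exact (measurable_const.mul ((hw x').mul (hw _))).mul (hY x')

lemma measurableSet_extinctionSet {mΩ : MeasurableSpace Ω} {w Y : List (Fin d) → Ω → ℝ}
    {U : List (Fin d) → Fin d → Ω → ℝ} (hw : ∀ x, Measurable (w x))
    (hY : ∀ x, Measurable (Y x)) (hU : ∀ x i, Measurable (U x i)) :
    MeasurableSet (extinctionSet lam d w Y U) := by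
  simp only [extinctionSet, eq_empty_iff_forall_notMem]
  exact measurableSet_setOfPred.mpr <| Measurable.exists fun n => Measurable.forall fun x =>
    (measurable_mem_WSet hw hY hU n x).not

lemma extinctionSet_eq_preimage (w Y : List (Fin d) → Ω → ℝ)
    (U : List (Fin d) → Fin d → Ω → ℝ) :
    extinctionSet lam d w Y U = (fun ω j => clockFamily w Y U j ω) ⁻¹'
      extinctionSet lam d (fun x f => f (.inl x)) (fun x f => f (.inr (.inl x)))
        (fun x i f => f (.inr (.inr (x, i)))) := by
  ext ω
  simp only [extinctionSet, mem_preimage, mem_ofPred_eq]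
  exact exists_congr fun n => by rw [← WSet_comp (g := fun ω j => clockFamily w Y U j ω)]; rfl

end Branching

section Exponential

lemma expMeasure_Ico_le {r : ℝ} (hr : 0 ≤ r) (a b : ℝ) :
    expMeasure r (Ico a b) ≤ ENNReal.ofReal (r * (b - a)) := by
  have hpdf : ∀ x, exponentialPDF r x ≤ ENNReal.ofReal r := fun x => by
    rw [exponentialPDF_eq]
    gcongr
    split_ifs with hx
    · exact mul_le_of_le_one_right hr (Real.exp_le_one_iff.2 (by nlinarith))
    · exact hr
  calc expMeasure r (Ico a b) = ∫⁻ x in Ico a b, exponentialPDF r x :=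
        withDensity_apply _ measurableSet_Ico
    _ ≤ ∫⁻ _ in Ico a b, ENNReal.ofReal r := lintegral_mono hpdf
    _ = ENNReal.ofReal (r * (b - a)) := by
        rw [setLIntegral_const, Real.volume_Ico, ← ENNReal.ofReal_mul hr]

lemma ae_nonneg_expMeasure (r : ℝ) : ∀ᵐ x ∂expMeasure r, 0 ≤ x := by
  simp only [ae_iff, not_le]
  exact (withDensity_apply _ measurableSet_Iio).trans (lintegral_exponentialPDF_of_nonpos le_rfl)

lemma lintegral_ofReal_expMeasure_one : ∫⁻ x, ENNReal.ofReal x ∂expMeasure 1 = 1 := by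
  have hpdf : ∀ x, (exponentialPDF 1 * ENNReal.ofReal) x =
      (Ioi 0).indicator (fun x => ENNReal.ofReal (Real.exp (-x) * x ^ ((2 : ℝ) - 1))) x := by
    intro x
    rw [Pi.mul_apply]
    rcases le_or_gt x 0 with hx | hx
    · rw [Set.indicator_of_notMem (by simpa using hx), ENNReal.ofReal_of_nonpos hx, mul_zero]
    · rw [Set.indicator_of_mem (Set.mem_Ioi.2 hx), exponentialPDF_of_nonneg hx.le,
        ← ENNReal.ofReal_mul (by positivity)]
      norm_num
  have hint : IntegrableOn (fun x => Real.exp (-x) * x ^ ((2 : ℝ) - 1)) (Ioi 0) :=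
    Real.GammaIntegral_convergent two_pos
  have hnonneg : 0 ≤ᵐ[volume.restrict (Ioi 0)] fun x => Real.exp (-x) * x ^ ((2 : ℝ) - 1) :=
    ae_restrict_of_forall_mem measurableSet_Ioi fun x hx =>
      mul_nonneg (Real.exp_nonneg _) (Real.rpow_nonneg (le_of_lt hx) _)
  have hexp : expMeasure 1 = volume.withDensity (exponentialPDF 1) := rfl
  have hmeas : Measurable (exponentialPDF 1) := (measurable_exponentialPDFReal 1).ennreal_ofReal
  rw [hexp, lintegral_withDensity_eq_lintegral_mul _ hmeas ENNReal.measurable_ofReal,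
    lintegral_congr hpdf, lintegral_indicator measurableSet_Ioi,
    ← ofReal_integral_eq_lintegral_ofReal hint hnonneg, ← Real.Gamma_eq_integral two_pos,
    Real.Gamma_two, ENNReal.ofReal_one]

end Exponential

section EdgeFlip

variable {Ω : Type*} {mΩ : MeasurableSpace Ω} {P : Measure Ω}

lemma measure_mem_Ico_le_lintegral [IsFiniteMeasure P] {L R U : Ω → ℝ} (hL : Measurable L)
    (hR : Measurable R) (hU : Measurable U) (hUlaw : P.map U = expMeasure 1)
    (hind : IndepFun (fun ω => (L ω, R ω)) U P) :
    P {ω | U ω ∈ Ico (L ω) (R ω)} ≤ ∫⁻ ω, ENNReal.ofReal (R ω - L ω) ∂P := by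
  set V := fun ω => (L ω, R ω)
  have hV : Measurable V := hL.prodMk hR
  set T : Set ((ℝ × ℝ) × ℝ) := {p | p.2 ∈ Ico p.1.1 p.1.2}
  have hT : MeasurableSet T :=
    (measurableSet_le measurable_fst.fst measurable_snd).inter
      (measurableSet_lt measurable_snd measurable_fst.snd)
  have := isProbabilityMeasure_expMeasure one_pos
  calc P {ω | U ω ∈ Ico (L ω) (R ω)} = P ((fun ω => (V ω, U ω)) ⁻¹' T) := rfl
    _ = ((P.map V).prod (expMeasure 1)) T := by
        rw [← Measure.map_apply (hV.prodMk hU) hT,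
          hind.map_prod_eq_prod_map_map hV.aemeasurable hU.aemeasurable, hUlaw]
    _ = ∫⁻ v, expMeasure 1 (Ico v.1 v.2) ∂P.map V := Measure.prod_apply hT
    _ ≤ ∫⁻ v, ENNReal.ofReal (v.2 - v.1) ∂P.map V :=
        lintegral_mono fun v => by simpa using expMeasure_Ico_le zero_le_one v.1 v.2
    _ = ∫⁻ ω, ENNReal.ofReal (R ω - L ω) ∂P := lintegral_map (by fun_prop) hV

lemma measure_not_iff_lt_mul_le [IsFiniteMeasure P] {W Y U : Ω → ℝ} (hW : Measurable W)
    (hY : Measurable Y) (hU : Measurable U) {M a b : ℝ} (hWM : ∀ᵐ ω ∂P, W ω ∈ Icc 0 M)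
    (hYlaw : P.map Y = expMeasure 1) (hUlaw : P.map U = expMeasure 1)
    (hind : IndepFun (fun ω => (W ω, Y ω)) U P) (hab : a ≤ b) :
    P {ω | ¬(U ω < a * W ω * Y ω ↔ U ω < b * W ω * Y ω)} ≤ ENNReal.ofReal ((b - a) * M) := by
  have hY0 : ∀ᵐ ω ∂P, 0 ≤ Y ω := ae_of_ae_map hY.aemeasurable (hYlaw ▸ ae_nonneg_expMeasure 1)
  have hflip : {ω | ¬(U ω < a * W ω * Y ω ↔ U ω < b * W ω * Y ω)} ≤ᵐ[P]
      {ω | U ω ∈ Ico (a * W ω * Y ω) (b * W ω * Y ω)} := by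
    filter_upwards [hWM, hY0] with ω hWω hYω (hω : ¬(_ ↔ _))
    have hle : a * W ω * Y ω ≤ b * W ω * Y ω := by
      have := hWω.1
      gcongr
    exact ⟨not_lt.1 fun h => hω (iff_of_true h (h.trans_le hle)),
      by_contra fun h => hω (iff_of_false (fun h' => h (h'.trans_le hle)) h)⟩
  have hind' : IndepFun (fun ω => (a * W ω * Y ω, b * W ω * Y ω)) U P :=
    hind.comp (φ := fun p : ℝ × ℝ => (a * p.1 * p.2, b * p.1 * p.2)) (ψ := id) (by fun_prop)
      measurable_id
  calc P {ω | ¬(U ω < a * W ω * Y ω ↔ U ω < b * W ω * Y ω)}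
      ≤ P {ω | U ω ∈ Ico (a * W ω * Y ω) (b * W ω * Y ω)} := measure_mono_ae hflip
    _ ≤ ∫⁻ ω, ENNReal.ofReal (b * W ω * Y ω - a * W ω * Y ω) ∂P :=
        measure_mem_Ico_le_lintegral (by fun_prop) (by fun_prop) hU hUlaw hind'
    _ ≤ ∫⁻ ω, ENNReal.ofReal ((b - a) * M) * ENNReal.ofReal (Y ω) ∂P := by
        refine lintegral_mono_ae ?_
        filter_upwards [hWM, hY0] with ω hWω hYω
        rw [← ENNReal.ofReal_mul' hYω]
        gcongr
        have := mul_le_mul_of_nonneg_left hWω.2 (sub_nonneg.2 hab)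
        nlinarith
    _ = ENNReal.ofReal ((b - a) * M) * ∫⁻ ω, ENNReal.ofReal (Y ω) ∂P :=
        lintegral_const_mul _ (by fun_prop)
    _ = ENNReal.ofReal ((b - a) * M) := by
        rw [← lintegral_map ENNReal.measurable_ofReal hY, hYlaw, lintegral_ofReal_expMeasure_one,
          mul_one]

end EdgeFlip

namespace TreeModelRoot

variable {Ω Ω' : Type} {mΩ : MeasurableSpace Ω} {mΩ' : MeasurableSpace Ω'} {P : Measure Ω}
  {P' : Measure Ω'} {μ : Measure ℝ} {lam s t : ℝ} {d : ℕ}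

lemma measurable_clockFamily (B : TreeModelRoot P μ lam d s) :
    ∀ j, Measurable (clockFamily B.w B.Y B.U j)
  | .inl x => B.hw x
  | .inr (.inl x) => B.hY x
  | .inr (.inr (x, i)) => B.hU x i

lemma identDistrib_clockFamily (B : TreeModelRoot P μ lam d s) (B' : TreeModelRoot P' μ lam d s)
    (j : List (Fin d) ⊕ List (Fin d) ⊕ List (Fin d) × Fin d) :
    IdentDistrib (clockFamily B.w B.Y B.U j) (clockFamily B'.w B'.Y B'.U j) P P' where
  aemeasurable_fst := (B.measurable_clockFamily j).aemeasurable
  aemeasurable_snd := (B'.measurable_clockFamily j).aemeasurable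
  map_eq := by
    have := B.hprob
    have := B'.hprob
    rcases j with x | x | ⟨x, i⟩
    · by_cases hx : x = []
      · subst hx
        change P.map (B.w []) = P'.map (B'.w [])
        rw [funext B.hroot, funext B'.hroot, Measure.map_const, Measure.map_const, measure_univ,
          measure_univ]
      · exact (B.hwlaw x hx).trans (B'.hwlaw x hx).symm
    · exact (B.hYlaw x).trans (B'.hYlaw x).symm
    · exact (B.hUlaw x i).trans (B'.hUlaw x i).symm

lemma measure_extinctionSet_eq (B : TreeModelRoot P μ lam d s)
    (B' : TreeModelRoot P' μ lam d s) :
    P (extinctionSet lam d B.w B.Y B.U) = P' (extinctionSet lam d B'.w B'.Y B'.U) := by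
  rw [extinctionSet_eq_preimage B.w, extinctionSet_eq_preimage B'.w]
  refine (IdentDistrib.pi (B.identDistrib_clockFamily B') B.hIndep B'.hIndep).measure_mem_eq ?_
  exact measurableSet_extinctionSet (fun _ => measurable_pi_apply _)
    (fun _ => measurable_pi_apply _) (fun _ _ => measurable_pi_apply _)

def withRoot (B : TreeModelRoot P μ lam d t) (s : ℝ) : TreeModelRoot P μ lam d s where
  hprob := B.hprob
  w x ω := if x = [] then s else B.w x ω
  Y := B.Y
  U := B.U
  hw x := by by_cases hx : x = [] <;> simp [hx, B.hw x]
  hY := B.hY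
  hU := B.hU
  hroot _ := if_pos rfl
  hwlaw x hx := by simpa only [if_neg hx] using B.hwlaw x hx
  hYlaw := B.hYlaw
  hUlaw := B.hUlaw
  hIndep := by
    let g : List (Fin d) ⊕ List (Fin d) ⊕ List (Fin d) × Fin d → ℝ → ℝ :=
      Sum.elim (fun x r => if x = [] then s else r) fun _ r => r
    have hg : ∀ j, Measurable (g j) := by
      rintro (x | _)
      · by_cases hx : x = [] <;> simp [g, hx, measurable_id']
      · exact measurable_id
    convert B.hIndep.comp g hg using 1
    funext j
    rcases j with x | x | ⟨x, i⟩ <;> rfl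

lemma extinctionSet_withRoot_symmDiff_subset (B : TreeModelRoot P μ lam d t) (s : ℝ) :
    extinctionSet lam d (B.withRoot s).w B.Y B.U ∆ extinctionSet lam d B.w B.Y B.U ⊆
      ⋃ i, {ω | ¬(B.U [] i ω < lam / d * s * B.w [i] ω * B.Y [] ω ↔
        B.U [] i ω < lam / d * t * B.w [i] ω * B.Y [] ω)} := by
  intro ω hω
  by_contra hD
  simp only [mem_iUnion, mem_ofPred_eq, not_exists, not_not] at hD
  have hW : ∀ n, WSet lam d (B.withRoot s).w B.Y B.U ω n = WSet lam d B.w B.Y B.U ω n :=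
    WSet_eq_of_root_edges (fun x hx => if_neg hx) fun i => by
      simpa only [withRoot, if_pos, if_neg (List.cons_ne_nil i []), B.hroot, mul_assoc] using hD i
  simp only [extinctionSet, mem_symmDiff, mem_ofPred_eq, hW] at hω
  tauto

lemma measure_root_edge_flip_le [IsProbabilityMeasure μ] (B : TreeModelRoot P μ lam d t) {M : ℝ}
    (hμM : μ (Icc 0 M) = 1) (i : Fin d) {a b : ℝ} (hab : a ≤ b) :
    P {ω | ¬(B.U [] i ω < a * B.w [i] ω * B.Y [] ω ↔ B.U [] i ω < b * B.w [i] ω * B.Y [] ω)} ≤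
      ENNReal.ofReal ((b - a) * M) := by
  have := B.hprob
  have hW : ∀ᵐ ω ∂P, B.w [i] ω ∈ Icc 0 M := by
    refine ae_of_ae_map (B.hw _).aemeasurable ?_
    rw [B.hwlaw _ (List.cons_ne_nil i [])]
    exact (mem_ae_iff_prob_eq_one measurableSet_Icc).2 hμM
  have hind : IndepFun (fun ω => (B.w [i] ω, B.Y [] ω)) (B.U [] i) P :=
    B.hIndep.indepFun_prodMk B.measurable_clockFamily (.inl [i]) (.inr (.inl []))
      (.inr (.inr ([], i))) (by simp) (by simp)
  exact measure_not_iff_lt_mul_le (B.hw _) (B.hY _) (B.hU _ _) hW (B.hYlaw _) (B.hUlaw _ _)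
    hind hab

end TreeModelRoot

theorem F_lipschitz_general (M : ℝ) (hM : 0 < M)
    (μ : Measure ℝ) [IsProbabilityMeasure μ]
    (hμM : μ (Set.Icc (0 : ℝ) M) = 1)
    (lam : ℝ) (hlam : 0 < lam)
    (Ω : ℕ → ℝ → Type) (mΩ : ∀ d s, MeasurableSpace (Ω d s))
    (P : ∀ d s, @Measure (Ω d s) (mΩ d s))
    (B : ∀ d s, TreeModelRoot (P d s) μ lam d s)
    (F : ℕ → ℝ → ℝ)
    (hF : ∀ d s, F d s = ((P d s)
      {ω | ∃ n : ℕ, WSet lam d (B d s).w (B d s).Y (B d s).U ω n = ∅}).toReal) :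
    ∀ d : ℕ, 1 ≤ d → ∀ s t : ℝ, 0 ≤ s → s < t → t ≤ M →
      |F d s - F d t| ≤ lam * M * (t - s) := by
  intro d hd s t _ hst _
  have := (B d t).hprob
  set Bs := (B d t).withRoot s
  have hFs : F d s = (P d t).real (extinctionSet lam d Bs.w Bs.Y Bs.U) := by
    rw [hF]
    exact congrArg ENNReal.toReal ((B d s).measure_extinctionSet_eq Bs)
  have hab : lam / d * s ≤ lam / d * t := by gcongr
  calc |F d s - F d t|
      ≤ (P d t).real (extinctionSet lam d Bs.w Bs.Y Bs.U ∆
          extinctionSet lam d (B d t).w (B d t).Y (B d t).U) := by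
        rw [hFs, hF]
        exact abs_measureReal_sub_le_measureReal_symmDiff
          (measurableSet_extinctionSet Bs.hw Bs.hY Bs.hU).nullMeasurableSet
          (measurableSet_extinctionSet (B d t).hw (B d t).hY (B d t).hU).nullMeasurableSet
    _ ≤ ∑ i : Fin d, (P d t).real {ω | ¬((B d t).U [] i ω < lam / d * s * (B d t).w [i] ω *
          (B d t).Y [] ω ↔ (B d t).U [] i ω < lam / d * t * (B d t).w [i] ω * (B d t).Y [] ω)} :=
        (measureReal_mono ((B d t).extinctionSet_withRoot_symmDiff_subset s)).trans
          (measureReal_iUnion_fintype_le _)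
    _ ≤ ∑ _i : Fin d, (lam / d * t - lam / d * s) * M :=
        Finset.sum_le_sum fun i _ => ENNReal.toReal_le_of_le_ofReal
          (mul_nonneg (sub_nonneg.2 hab) hM.le) ((B d t).measure_root_edge_flip_le hμM i hab)
    _ = lam * M * (t - s) := by
        have : (d : ℝ) ≠ 0 := by positivity
        simp only [Finset.sum_const, Finset.card_univ, Fintype.card_fin, nsmul_eq_mul]
        field_simp

/-- For every `d ≥ 1` and all `0 ≤ s < t ≤ M`, the extinction
probabilities `F d s = P̂_{λ,d}(W_n = ∅ for some n ≥ 0)` (root weight set to `s`) of the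
branching process with random vertex weights satisfy `|F_d(s) − F_d(t)| ≤ λM(t − s)`. -/
theorem F_lipschitz (M : ℝ) (hM : 0 < M)
    (μ : Measure ℝ) [IsProbabilityMeasure μ]
    (hμM : μ (Set.Icc (0 : ℝ) M) = 1) (hμpos : 0 < μ (Set.Ioi (0 : ℝ)))
    (lam : ℝ) (hlam : 0 < lam)
    (Ω : ℕ → ℝ → Type) (mΩ : ∀ d s, MeasurableSpace (Ω d s))
    (P : ∀ d s, @Measure (Ω d s) (mΩ d s))
    (B : ∀ d s, TreeModelRoot (P d s) μ lam d s)
    (F : ℕ → ℝ → ℝ)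
    (hF : ∀ d s, F d s = ((P d s)
      {ω | ∃ n : ℕ, WSet lam d (B d s).w (B d s).Y (B d s).U ω n = ∅}).toReal) :
    ∀ d : ℕ, 1 ≤ d → ∀ s t : ℝ, 0 ≤ s → s < t → t ≤ M →
      |F d s - F d t| ≤ lam * M * (t - s) :=
  F_lipschitz_general M hM μ hμM lam hlam Ω mΩ P B F hF
end
end

section
/- Assume there is a constant c₃ > 0 such that ℙ_d(τ_{O,O} < +∞) ≤ 1/d + c₃/d² for every d ≥ 4. Then there exists a constant c₁ > 0, not depending on d, such that for every d ≥ 4 and all x, y ∈ ℤ₊^d with x ≠ y and ‖x‖ ≤ ‖y‖, ℙ_d(τ_{x,y} < +∞) ≤ c₁/√d. -/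
open MeasureTheory ProbabilityTheory Filter Set

noncomputable section

/-- The oriented random walk on `ℤ₊^d` started at `x` whose `m`-th increment is the
standard basis vector `e_{inc m}`: its position after `k` steps. -/
def walkRW {Ω : Type} {d : ℕ} (x : Fin d → ℕ) (inc : ℕ → Ω → Fin d) (k : ℕ) (ω : Ω) :
    Fin d → ℕ :=
  fun i => x i + ∑ m ∈ Finset.range k, (if inc m ω = i then 1 else 0)

/-- The `ℓ¹` norm of a vertex of `ℤ₊^d`. -/
def nrm {d : ℕ} (x : Fin d → ℕ) : ℕ := ∑ i, x i

/-- Two independent oriented random walks on `ℤ₊^d`: the two increment sequences `inc1`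
and `inc2` are i.i.d. uniform on the standard basis directions `Fin d`, and all the
increments are jointly independent; `ℙ_d` is the probability measure `P`. -/
structure RWModel {Ω : Type} [MeasurableSpace Ω] (P : Measure Ω) (d : ℕ) where
  hprob : IsProbabilityMeasure P
  inc1 : ℕ → Ω → Fin d
  inc2 : ℕ → Ω → Fin d
  h1meas : ∀ n, Measurable (inc1 n)
  h2meas : ∀ n, Measurable (inc2 n)
  h1law : ∀ (n : ℕ) (j : Fin d), P {ω | inc1 n ω = j} = (d : ENNReal)⁻¹
  h2law : ∀ (n : ℕ) (j : Fin d), P {ω | inc2 n ω = j} = (d : ENNReal)⁻¹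
  hIndep : iIndepFun (m := fun _ : ℕ ⊕ ℕ => (inferInstance : MeasurableSpace (Fin d)))
    (Sum.elim inc1 inc2) P

/-- The event `τ_{x,y} < ∞` (for `‖x‖ ≤ ‖y‖`): the walk started at `x` eventually hits the
trajectory of the walk started at `y`, i.e. there is `k ≥ ‖y‖ − ‖x‖` with
`ϑ_k^x = ν_{k−‖y‖+‖x‖}^y`. -/
def meetEvent {Ω : Type} {d : ℕ} (inc1 inc2 : ℕ → Ω → Fin d) (x y : Fin d → ℕ) :
    Set Ω :=
  {ω | ∃ k : ℕ, nrm y - nrm x ≤ k ∧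
    walkRW x inc1 k ω = walkRW y inc2 (k - (nrm y - nrm x)) ω}

/-- The event `τ_{O,O} < ∞`: the two walks started at the origin collide at some time
`n ≥ 1`. -/
def meetOrigin {Ω : Type} {d : ℕ} (inc1 inc2 : ℕ → Ω → Fin d) : Set Ω :=
  {ω | ∃ n : ℕ, 1 ≤ n ∧
    walkRW (fun _ => 0) inc1 n ω = walkRW (fun _ => 0) inc2 n ω}

/-!
Two walks from the origin meet with probability `p ≤ 2/d` once `d ≥ c₃`. Splitting a collision
at time `j` according to the first collision gives the renewal inequality
`r_j ≤ ∑_{1 ≤ t ≤ j} f_t r_{j-t}` for the probabilities `r_j` of a collision at time `j` and `f_t`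
of a first collision at time `t`, so the expected number of collisions `∑_{j ≥ 1} r_j` is at most
`p / (1 - p) ≤ 4/d`.

The windows of increments of the two walks are uniform on pairs of step sequences, so all these
probabilities are counts. Grouping pairs by their common endpoint, Cauchy–Schwarz bounds the
probability that the walk from `x` after `k` steps sits where the walk from `y` is after
`k - m` steps (`m = ‖y‖ - ‖x‖`) by `√(r_k r_{k-m}) ≤ (r_k + r_{k-m}) / 2`. The term `k = m` is
handled separately: there the last step of the walk from `x` is forced, which costs a factor
`1/d`. Summing over `k` gives `ℙ(τ_{x,y} < ∞) ≤ 5/d`, and finitely many small `d` are absorbed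
into the constant.
-/

open Finset

theorem sum_range_le_mul_one_add_of_renewal {r f : ℕ → ℝ} {p : ℝ} (hr₀ : r 0 = 1)
    (hr : ∀ n, 0 ≤ r n) (hf : ∀ n, 0 ≤ f n) (hfp : ∀ K, ∑ t ∈ range K, f (t + 1) ≤ p)
    (hrf : ∀ j, r (j + 1) ≤ ∑ t ∈ range (j + 1), f (t + 1) * r (j - t)) (K : ℕ) :
    ∑ j ∈ range K, r (j + 1) ≤ p * (1 + ∑ j ∈ range K, r (j + 1)) := by
  set G := ∑ j ∈ range K, r (j + 1)
  have hG : 0 ≤ G := sum_nonneg fun j _ => hr (j + 1)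
  have hshift (t : ℕ) : ∑ j ∈ Ico t K, r (j - t) ≤ 1 + G :=
    calc ∑ j ∈ Ico t K, r (j - t) = ∑ u ∈ range (K - t), r u := by
          rw [sum_Ico_eq_sum_range]; simp
      _ ≤ ∑ u ∈ range (K + 1), r u :=
          sum_le_sum_of_subset_of_nonneg (range_subset_range.2 (by omega)) fun u _ _ => hr u
      _ = 1 + G := by rw [sum_range_succ', hr₀, add_comm]
  calc G ≤ ∑ j ∈ range K, ∑ t ∈ range (j + 1), f (t + 1) * r (j - t) :=
        sum_le_sum fun j _ => hrf j
    _ = ∑ t ∈ range K, f (t + 1) * ∑ j ∈ Ico t K, r (j - t) := by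
        simp_rw [mul_sum]
        exact sum_comm' fun j t => by simp only [Finset.mem_range, Finset.mem_Ico]; omega
    _ ≤ ∑ t ∈ range K, f (t + 1) * (1 + G) :=
        sum_le_sum fun t _ => mul_le_mul_of_nonneg_left (hshift t) (hf _)
    _ ≤ p * (1 + G) := by rw [← sum_mul]; exact mul_le_mul_of_nonneg_right (hfp K) (by linarith)

theorem MeasureTheory.measureReal_iUnion_le_of_sum_range_le {Ω : Type*} [MeasurableSpace Ω]
    {μ : Measure Ω} [IsFiniteMeasure μ] {A : ℕ → Set Ω} {c : ℝ}
    (h : ∀ n, ∑ i ∈ range n, μ.real (A i) ≤ c) : μ.real (⋃ i, A i) ≤ c := by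
  have hc : 0 ≤ c := by simpa using h 0
  refine ENNReal.toReal_le_of_le_ofReal hc <|
    (measure_iUnion_le A).trans (ENNReal.tsum_le_of_sum_range_le fun n => ?_)
  calc ∑ i ∈ range n, μ (A i) = ENNReal.ofReal (∑ i ∈ range n, μ.real (A i)) := by
        rw [ENNReal.ofReal_sum_of_nonneg fun _ _ => measureReal_nonneg]
        exact sum_congr rfl fun i _ => (ofReal_measureReal).symm
    _ ≤ ENNReal.ofReal c := ENNReal.ofReal_le_ofReal (h n)

theorem card_filter_eq_eq_sum_mul {A B V : Type*} [Fintype A] [Fintype B] [DecidableEq V]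
    (φ : A → V) (ψ : B → V) {T : Finset V} (hT : ∀ a, φ a ∈ T) :
    #{p : A × B | φ p.1 = ψ p.2} = ∑ v ∈ T, #{a | φ a = v} * #{b | ψ b = v} := by
  rw [card_eq_sum_card_fiberwise (f := fun p => φ p.1) (t := T) fun p _ => hT p.1]
  refine sum_congr rfl fun v _ => ?_
  rw [← card_product]
  congr 1
  ext ⟨a, b⟩
  simp only [mem_filter, Finset.mem_univ, true_and, mem_product]
  constructor
  · rintro ⟨hab, rfl⟩; exact ⟨rfl, hab.symm⟩
  · rintro ⟨rfl, hb⟩; exact ⟨hb.symm, rfl⟩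

theorem card_filter_eq_sq_le {A B V : Type*} [Fintype A] [Fintype B] [DecidableEq V]
    (φ : A → V) (ψ : B → V) :
    #{p : A × B | φ p.1 = ψ p.2} ^ 2 ≤
      #{p : A × A | φ p.1 = φ p.2} * #{p : B × B | ψ p.1 = ψ p.2} := by
  set T := Finset.univ.image φ ∪ Finset.univ.image ψ
  have hφ (a : A) : φ a ∈ T := mem_union_left _ (mem_image_of_mem _ (Finset.mem_univ a))
  have hψ (b : B) : ψ b ∈ T := mem_union_right _ (mem_image_of_mem _ (Finset.mem_univ b))
  rw [card_filter_eq_eq_sum_mul φ ψ hφ, card_filter_eq_eq_sum_mul φ φ hφ,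
    card_filter_eq_eq_sum_mul ψ ψ hψ]
  simpa only [sq] using
    sum_mul_sq_le_sq_mul_sq T (fun v => #{a | φ a = v}) (fun v => #{b | ψ b = v})

namespace OrientedWalk

variable {d : ℕ}

def stepCount {n : ℕ} (f : Fin n → Fin d) : Fin d → ℕ :=
  fun i => ∑ s, if f s = i then 1 else 0

lemma walkRW_eq_add_stepCount {Ω : Type} (x : Fin d → ℕ) (inc : ℕ → Ω → Fin d) (k : ℕ)
    (ω : Ω) : walkRW x inc k ω = x + stepCount (fun s : Fin k => inc s ω) :=
  funext fun i => congrArg (x i + ·) (Fin.sum_univ_eq_sum_range (fun _ => _) k).symm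

lemma walkRW_zero {Ω : Type} (x : Fin d → ℕ) (inc : ℕ → Ω → Fin d) (ω : Ω) :
    walkRW x inc 0 ω = x :=
  funext fun _ => by simp [walkRW]

lemma stepCount_append {t u : ℕ} (f : Fin (t + u) → Fin d) :
    stepCount f = stepCount (f ∘ Fin.castAdd u) + stepCount (f ∘ Fin.natAdd t) :=
  funext fun _ => Fin.sum_univ_add _

lemma eq_of_stepCount_eq_of_comp_castSucc_eq {a : ℕ} {f g : Fin (a + 1) → Fin d}
    (hcount : stepCount f = stepCount g) (hinit : f ∘ Fin.castSucc = g ∘ Fin.castSucc) :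
    f = g := by
  have hlast : f (Fin.last a) = g (Fin.last a) := by
    by_contra hne
    have h := congrFun hcount (f (Fin.last a))
    simp only [stepCount, Fin.sum_univ_castSucc, ← Function.comp_apply (f := f),
      ← Function.comp_apply (f := g), hinit] at h
    simp [Ne.symm hne] at h
  funext s
  exact Fin.lastCases hlast (fun s => congrFun hinit s) s

variable (d) in
def collisionPairs (n : ℕ) : Finset ((Fin n → Fin d) × (Fin n → Fin d)) :=
  {p | stepCount p.1 = stepCount p.2}

def meetingPairs (x y : Fin d → ℕ) (a b : ℕ) : Finset ((Fin a → Fin d) × (Fin b → Fin d)) :=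
  {p | x + stepCount p.1 = y + stepCount p.2}

variable (d) in
def firstCollisionPairs (t : ℕ) : Finset ((Fin t → Fin d) × (Fin t → Fin d)) :=
  {p | stepCount p.1 = stepCount p.2 ∧ ∀ s (hs : s < t), 0 < s →
    stepCount (p.1 ∘ Fin.castLE hs.le) ≠ stepCount (p.2 ∘ Fin.castLE hs.le)}

theorem card_meetingPairs_sq_le (x y : Fin d → ℕ) (a b : ℕ) :
    #(meetingPairs x y a b) ^ 2 ≤ #(collisionPairs d a) * #(collisionPairs d b) := by
  have h := card_filter_eq_sq_le (fun f : Fin a → Fin d => x + stepCount f)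
    (fun g : Fin b → Fin d => y + stepCount g)
  simp only [add_right_inj] at h
  exact h

theorem card_meetingPairs_zero_le (x y : Fin d → ℕ) (a : ℕ) :
    #(meetingPairs x y (a + 1) 0) ≤ d ^ a := by
  have hinj : Set.InjOn (fun p : (Fin (a + 1) → Fin d) × (Fin 0 → Fin d) => p.1 ∘ Fin.castSucc)
      (meetingPairs x y (a + 1) 0) := by
    intro p hp q hq hpq
    simp only [meetingPairs, mem_coe, mem_filter, Finset.mem_univ, true_and] at hp hq
    refine Prod.ext (eq_of_stepCount_eq_of_comp_castSucc_eq ?_ hpq) (Subsingleton.elim _ _)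
    rw [Subsingleton.elim q.2 p.2, ← hp] at hq
    exact (add_right_injective x hq).symm
  simpa using card_le_card_of_injOn _ (fun _ _ => mem_univ _) hinj

theorem card_filter_prefix_suffix_le (t u : ℕ)
    (A : Finset ((Fin t → Fin d) × (Fin t → Fin d)))
    (B : Finset ((Fin u → Fin d) × (Fin u → Fin d))) :
    #{p : (Fin (t + u) → Fin d) × (Fin (t + u) → Fin d) |
        (p.1 ∘ Fin.castAdd u, p.2 ∘ Fin.castAdd u) ∈ A ∧
        (p.1 ∘ Fin.natAdd t, p.2 ∘ Fin.natAdd t) ∈ B} ≤ #A * #B := by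
  rw [← card_product]
  refine card_le_card_of_injOn (fun p => ((p.1 ∘ Fin.castAdd u, p.2 ∘ Fin.castAdd u),
    (p.1 ∘ Fin.natAdd t, p.2 ∘ Fin.natAdd t))) (fun p hp => ?_) fun p _ q _ hpq => ?_
  · simp only [mem_coe, mem_filter, Finset.mem_univ, true_and] at hp
    exact mem_product.2 hp
  · simp only [Prod.mk.injEq] at hpq
    obtain ⟨⟨h₁, h₂⟩, h₃, h₄⟩ := hpq
    exact Prod.ext (funext (Fin.addCases (congrFun h₁) (congrFun h₃)))
      (funext (Fin.addCases (congrFun h₂) (congrFun h₄)))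

end OrientedWalk

namespace RWModel

open OrientedWalk Function
open scoped ENNReal

variable {Ω : Type} [MeasurableSpace Ω] {P : Measure Ω} {d : ℕ} (M : RWModel P d)

def window (n₁ n₂ : ℕ) (ω : Ω) : (Fin n₁ → Fin d) × (Fin n₂ → Fin d) :=
  (fun s => M.inc1 s ω, fun s => M.inc2 s ω)

lemma dim_pos (M : RWModel P d) : 0 < d := by
  have := M.hprob
  obtain ⟨ω⟩ := nonempty_of_isProbabilityMeasure P
  exact (M.inc1 0 ω).pos

lemma measurable_window (n₁ n₂ : ℕ) : Measurable (M.window n₁ n₂) :=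
  (measurable_pi_lambda (fun ω (s : Fin n₁) => M.inc1 s ω) fun s => M.h1meas s).prodMk
    (measurable_pi_lambda (fun ω (s : Fin n₂) => M.inc2 s ω) fun s => M.h2meas s)

lemma measure_window_preimage_singleton {n₁ n₂ : ℕ} (e : (Fin n₁ → Fin d) × (Fin n₂ → Fin d)) :
    P (M.window n₁ n₂ ⁻¹' {e}) = (d : ℝ≥0∞)⁻¹ ^ (n₁ + n₂) := by
  have : NeZero d := ⟨M.dim_pos.ne'⟩
  let c : ℕ ⊕ ℕ → Fin d := Sum.elim (fun s => if h : s < n₁ then e.1 ⟨s, h⟩ else 0)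
    (fun s => if h : s < n₂ then e.2 ⟨s, h⟩ else 0)
  let S := (range n₁).disjSum (range n₂)
  have hS : M.window n₁ n₂ ⁻¹' {e} = ⋂ i ∈ S, Sum.elim M.inc1 M.inc2 i ⁻¹' {c i} := by
    ext ω
    simp only [S, c, window, Set.mem_preimage, Set.mem_singleton_iff, Prod.ext_iff, funext_iff,
      Fin.forall_iff, Set.mem_iInter, Sum.forall, inl_mem_disjSum, inr_mem_disjSum, Sum.elim_inl,
      Sum.elim_inr, Finset.mem_range]
    refine and_congr (forall₂_congr fun s hs => ?_) (forall₂_congr fun s hs => ?_) <;> simp [hs]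
  rw [hS, M.hIndep.measure_inter_preimage_eq_mul S fun _ _ => measurableSet_singleton _,
    Finset.prod_congr rfl fun i _ => ?_, prod_const, card_disjSum, card_range, card_range]
  rcases i with s | s
  · exact M.h1law s _
  · exact M.h2law s _

lemma measureReal_window_preimage {n₁ n₂ : ℕ}
    (E : Finset ((Fin n₁ → Fin d) × (Fin n₂ → Fin d))) :
    P.real (M.window n₁ n₂ ⁻¹' E) = #E / (d : ℝ) ^ (n₁ + n₂) := by
  rw [measureReal_def, ← sum_measure_preimage_singleton E fun e _ =>
    M.measurable_window _ _ (measurableSet_singleton e)]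
  simp [M.measure_window_preimage_singleton, div_eq_mul_inv]

lemma setOf_walkRW_eq_eq_preimage (x y : Fin d → ℕ) (k k' : ℕ) :
    {ω | walkRW x M.inc1 k ω = walkRW y M.inc2 k' ω} = M.window k k' ⁻¹' meetingPairs x y k k' := by
  ext ω
  simp [meetingPairs, window, walkRW_eq_add_stepCount]

def collision (j : ℕ) : Set Ω := M.window j j ⁻¹' collisionPairs d j

def firstCollision (t : ℕ) : Set Ω := M.collision t \ ⋃ s ∈ Set.Ico 1 t, M.collision s

lemma firstCollision_eq_preimage (t : ℕ) :
    M.firstCollision t = M.window t t ⁻¹' firstCollisionPairs d t := by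
  ext ω
  simp only [firstCollision, collision, collisionPairs, firstCollisionPairs, window, coe_filter,
    Finset.mem_univ, true_and, Set.preimage_ofPred_eq, Set.mem_Ico, Set.mem_sdiff,
    Set.mem_ofPred_eq, Set.mem_iUnion, exists_prop, not_exists, not_and, and_imp, comp_def, ne_eq,
    Fin.val_castLE, and_congr_right_iff]
  exact fun _ => ⟨fun h s hs hs₀ => h s hs₀ hs, fun h s hs₀ hs => h s hs hs₀⟩

lemma collision_subset_meetOrigin {j : ℕ} (hj : 1 ≤ j) :
    M.collision j ⊆ meetOrigin M.inc1 M.inc2 := fun ω hω =>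
  ⟨j, hj, by simpa [walkRW_eq_add_stepCount, collision, collisionPairs, window] using hω⟩

lemma measureReal_collision_zero : P.real (M.collision 0) = 1 := by
  have := M.hprob
  have : M.collision 0 = Set.univ := Set.eq_univ_of_forall fun ω => by
    simpa [collision, collisionPairs] using congrArg stepCount (Subsingleton.elim _ _)
  rw [this, probReal_univ]

lemma measureReal_walkRW_eq_sq_le (x y : Fin d → ℕ) (k k' : ℕ) :
    P.real {ω | walkRW x M.inc1 k ω = walkRW y M.inc2 k' ω} ^ 2 ≤
      P.real (M.collision k) * P.real (M.collision k') := by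
  rw [setOf_walkRW_eq_eq_preimage, collision, collision, measureReal_window_preimage,
    measureReal_window_preimage, measureReal_window_preimage, div_mul_div_comm, div_pow,
    ← pow_mul, ← pow_add]
  have hcard : ((#(meetingPairs x y k k') : ℕ) : ℝ) ^ 2 ≤
      #(collisionPairs d k) * #(collisionPairs d k') := by
    exact_mod_cast card_meetingPairs_sq_le x y k k'
  rw [show (k + k') * 2 = k + k + (k' + k') by ring]
  exact div_le_div_of_nonneg_right hcard (by positivity)

lemma measureReal_walkRW_eq_start_le {x y : Fin d → ℕ} (hxy : x ≠ y) (m : ℕ) :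
    P.real {ω | walkRW x M.inc1 m ω = walkRW y M.inc2 0 ω} ≤ (d : ℝ)⁻¹ := by
  cases m with
  | zero =>
    have : {ω | walkRW x M.inc1 0 ω = walkRW y M.inc2 0 ω} = ∅ := by simp [walkRW_zero, hxy]
    simp [this]
  | succ a =>
    have hd : (0 : ℝ) < d := by exact_mod_cast M.dim_pos
    rw [setOf_walkRW_eq_eq_preimage, measureReal_window_preimage, div_le_iff₀ (by positivity),
      add_zero, pow_succ, mul_comm _ (d : ℝ), ← mul_assoc, inv_mul_cancel₀ hd.ne', one_mul]
    exact_mod_cast card_meetingPairs_zero_le x y a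

lemma firstCollision_subset_collision (t : ℕ) : M.firstCollision t ⊆ M.collision t :=
  Set.sdiff_subset

lemma measurableSet_firstCollision (t : ℕ) : MeasurableSet (M.firstCollision t) := by
  rw [firstCollision_eq_preimage]
  exact M.measurable_window t t (Finset.measurableSet _)

lemma pairwise_disjoint_firstCollision :
    Pairwise (Disjoint on fun t => M.firstCollision (t + 1)) := by
  refine (pairwise_disjoint_on _).2 fun s t hst => Set.disjoint_left.2 fun ω hs ht => ht.2 ?_
  exact Set.mem_biUnion ⟨by omega, by omega⟩ (M.firstCollision_subset_collision _ hs)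

lemma sum_measureReal_firstCollision_le (K : ℕ) :
    ∑ t ∈ range K, P.real (M.firstCollision (t + 1)) ≤ P.real (meetOrigin M.inc1 M.inc2) := by
  have := M.hprob
  rw [← measureReal_biUnion_finset (M.pairwise_disjoint_firstCollision.set_pairwise _)
    fun t _ => M.measurableSet_firstCollision _]
  exact measureReal_mono (Set.iUnion₂_subset fun t _ => (M.firstCollision_subset_collision _).trans
    (M.collision_subset_meetOrigin (Nat.le_add_left 1 t)))

lemma collision_subset_iUnion_firstCollision (j : ℕ) :
    M.collision (j + 1) ⊆ ⋃ t ∈ range (j + 1), M.firstCollision (t + 1) := by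
  classical
  intro ω hω
  have hex : ∃ t, ω ∈ M.collision (t + 1) := ⟨j, hω⟩
  refine Set.mem_biUnion (mem_range.2 (Nat.lt_succ_of_le (Nat.find_min' hex hω)))
    ⟨Nat.find_spec hex, ?_⟩
  simp only [Set.mem_iUnion, Set.mem_Ico, not_exists]
  rintro _ ⟨hs₁, hs₂⟩ hs
  obtain ⟨s, rfl⟩ := Nat.exists_eq_add_of_le' hs₁
  exact Nat.find_min hex (by omega) hs

lemma measureReal_firstCollision_inter_collision_le (t u : ℕ) :
    P.real (M.firstCollision t ∩ M.collision (t + u)) ≤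
      P.real (M.firstCollision t) * P.real (M.collision u) := by
  have := M.hprob
  let F : Finset ((Fin (t + u) → Fin d) × (Fin (t + u) → Fin d)) :=
    {p | (p.1 ∘ Fin.castAdd u, p.2 ∘ Fin.castAdd u) ∈ firstCollisionPairs d t ∧
      (p.1 ∘ Fin.natAdd t, p.2 ∘ Fin.natAdd t) ∈ collisionPairs d u}
  have hsub : M.firstCollision t ∩ M.collision (t + u) ⊆ M.window (t + u) (t + u) ⁻¹' F := by
    rintro ω ⟨hfirst, hcol⟩
    have hcol_t := M.firstCollision_subset_collision t hfirst
    rw [firstCollision_eq_preimage] at hfirst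
    simp only [collision, collisionPairs, Set.mem_preimage, mem_coe, mem_filter,
      Finset.mem_univ, true_and, F] at hcol hcol_t ⊢
    rw [stepCount_append, stepCount_append] at hcol
    exact ⟨hfirst, add_left_cancel (hcol_t ▸ hcol)⟩
  have hcard : ((#F : ℕ) : ℝ) ≤ #(firstCollisionPairs d t) * #(collisionPairs d u) := by
    exact_mod_cast card_filter_prefix_suffix_le t u _ _
  calc P.real (M.firstCollision t ∩ M.collision (t + u))
      ≤ P.real (M.window (t + u) (t + u) ⁻¹' F) := measureReal_mono hsub
    _ = #F / ((d : ℝ) ^ (t + t) * d ^ (u + u)) := by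
      rw [measureReal_window_preimage, ← pow_add]; ring_nf
    _ ≤ #(firstCollisionPairs d t) * #(collisionPairs d u) / ((d : ℝ) ^ (t + t) * d ^ (u + u)) :=
      div_le_div_of_nonneg_right hcard (by positivity)
    _ = P.real (M.firstCollision t) * P.real (M.collision u) := by
      rw [firstCollision_eq_preimage, collision, measureReal_window_preimage,
        measureReal_window_preimage, div_mul_div_comm]

lemma measureReal_collision_succ_le (j : ℕ) :
    P.real (M.collision (j + 1)) ≤
      ∑ t ∈ range (j + 1), P.real (M.firstCollision (t + 1)) * P.real (M.collision (j - t)) := by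
  have := M.hprob
  calc P.real (M.collision (j + 1))
      ≤ P.real (⋃ t ∈ range (j + 1), M.firstCollision (t + 1) ∩ M.collision (j + 1)) := by
        rw [← Set.iUnion₂_inter]
        exact measureReal_mono
          (Set.subset_inter (M.collision_subset_iUnion_firstCollision j) le_rfl)
    _ ≤ ∑ t ∈ range (j + 1), P.real (M.firstCollision (t + 1) ∩ M.collision (j + 1)) :=
        measureReal_biUnion_finset_le _ _
    _ ≤ _ := sum_le_sum fun t ht => by
        have : j + 1 = t + 1 + (j - t) := by have := mem_range.1 ht; omega
        rw [this]
        exact M.measureReal_firstCollision_inter_collision_le _ _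

lemma measureReal_walkRW_eq_le_avg (x y : Fin d → ℕ) (k k' : ℕ) :
    P.real {ω | walkRW x M.inc1 k ω = walkRW y M.inc2 k' ω} ≤
      (P.real (M.collision k) + P.real (M.collision k')) / 2 := by
  have h := M.measureReal_walkRW_eq_sq_le x y k k'
  nlinarith [sq_nonneg (P.real (M.collision k) - P.real (M.collision k')),
    measureReal_nonneg (μ := P) (s := M.collision k),
    measureReal_nonneg (μ := P) (s := M.collision k'),
    measureReal_nonneg (μ := P) (s := {ω | walkRW x M.inc1 k ω = walkRW y M.inc2 k' ω})]

lemma sum_measureReal_collision_le {p : ℝ} (hp : P.real (meetOrigin M.inc1 M.inc2) ≤ p)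
    (hp₂ : p ≤ 1 / 2) (K : ℕ) : ∑ j ∈ range K, P.real (M.collision (j + 1)) ≤ 2 * p := by
  have h := sum_range_le_mul_one_add_of_renewal M.measureReal_collision_zero
    (fun _ => measureReal_nonneg) (fun _ => measureReal_nonneg)
    (fun K => (M.sum_measureReal_firstCollision_le K).trans hp) M.measureReal_collision_succ_le K
  have hG : 0 ≤ ∑ j ∈ range K, P.real (M.collision (j + 1)) :=
    sum_nonneg fun _ _ => measureReal_nonneg
  nlinarith

lemma measureReal_iUnion_walkRW_eq_le {q : ℝ}
    (hG : ∀ K, ∑ j ∈ range K, P.real (M.collision (j + 1)) ≤ q) (x y : Fin d → ℕ) (m : ℕ) :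
    P.real (⋃ i, {ω | walkRW x M.inc1 (m + i + 1) ω = walkRW y M.inc2 (i + 1) ω}) ≤ q := by
  have := M.hprob
  refine measureReal_iUnion_le_of_sum_range_le fun n => ?_
  have hshifted : ∑ i ∈ range n, P.real (M.collision (m + i + 1)) ≤ q := by
    refine le_trans ?_ (hG (m + n))
    rw [sum_range_add]
    exact le_add_of_nonneg_left (sum_nonneg fun _ _ => measureReal_nonneg)
  calc ∑ i ∈ range n, P.real {ω | walkRW x M.inc1 (m + i + 1) ω = walkRW y M.inc2 (i + 1) ω}
      ≤ (∑ i ∈ range n, P.real (M.collision (m + i + 1)) +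
          ∑ i ∈ range n, P.real (M.collision (i + 1))) / 2 := by
        rw [← sum_add_distrib, sum_div]
        exact sum_le_sum fun i _ => M.measureReal_walkRW_eq_le_avg x y _ _
    _ ≤ q := by linarith [hG n]

lemma measureReal_meetEvent_le (hd : 4 ≤ d) (hp : P.real (meetOrigin M.inc1 M.inc2) ≤ 2 / d)
    {x y : Fin d → ℕ} (hxy : x ≠ y) : P.real (meetEvent M.inc1 M.inc2 x y) ≤ 5 / d := by
  have := M.hprob
  set m := nrm y - nrm x
  have hsub : meetEvent M.inc1 M.inc2 x y ⊆
      {ω | walkRW x M.inc1 m ω = walkRW y M.inc2 0 ω} ∪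
        ⋃ i, {ω | walkRW x M.inc1 (m + i + 1) ω = walkRW y M.inc2 (i + 1) ω} := by
    rintro ω ⟨k, hk, hω⟩
    obtain rfl | hlt := hk.eq_or_lt
    · exact Or.inl (by simpa using hω)
    · refine Or.inr (Set.mem_iUnion.2 ⟨k - m - 1, ?_⟩)
      rwa [show m + (k - m - 1) + 1 = k by omega, show k - m - 1 + 1 = k - m by omega]
  have hG (K : ℕ) : ∑ j ∈ range K, P.real (M.collision (j + 1)) ≤ 4 / d := by
    have hd' : (4 : ℝ) ≤ d := by exact_mod_cast hd
    refine (M.sum_measureReal_collision_le hp ?_ K).trans_eq (by ring)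
    rw [div_le_div_iff₀ (by positivity) (by norm_num)]
    linarith
  calc P.real (meetEvent M.inc1 M.inc2 x y)
      ≤ (d : ℝ)⁻¹ + 4 / d := (measureReal_mono hsub).trans <| (measureReal_union_le _ _).trans <|
        add_le_add (M.measureReal_walkRW_eq_start_le hxy m)
          (M.measureReal_iUnion_walkRW_eq_le hG x y m)
    _ = 5 / d := by ring

end RWModel

theorem meet_prob_le_inv_sqrt_general (Ω : ℕ → Type) (mΩ : ∀ d, MeasurableSpace (Ω d))
    (P : ∀ d, @Measure (Ω d) (mΩ d))
    (RW : ∀ d, RWModel (P d) d)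
    (c₃ : ℝ)
    (hyp : ∀ d : ℕ, 4 ≤ d →
      ((P d) (meetOrigin (RW d).inc1 (RW d).inc2)).toReal ≤ 1 / d + c₃ / (d : ℝ) ^ 2) :
    ∃ c₁ : ℝ, 0 < c₁ ∧ ∀ d : ℕ, 4 ≤ d → ∀ x y : Fin d → ℕ, x ≠ y → nrm x ≤ nrm y →
      ((P d) (meetEvent (RW d).inc1 (RW d).inc2 x y)).toReal ≤ c₁ / Real.sqrt d := by
  set d₀ := max 4 ⌈c₃⌉₊
  refine ⟨√d₀ + 5, by positivity, fun d hd x y hxy _ => ?_⟩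
  have := (RW d).hprob
  have hd' : (1 : ℝ) ≤ d := by exact_mod_cast (by omega : 1 ≤ d)
  have hsqrt : 0 < √(d : ℝ) := by positivity
  rcases lt_or_ge d d₀ with hsmall | hlarge
  · calc (P d).real _ ≤ 1 := measureReal_le_one
      _ ≤ √d₀ / √d := (one_le_div hsqrt).2 (Real.sqrt_le_sqrt (by exact_mod_cast hsmall.le))
      _ ≤ (√d₀ + 5) / √d := by gcongr; linarith
  · have hc₃ : c₃ ≤ d := (Nat.le_ceil c₃).trans (by exact_mod_cast le_of_max_le_right hlarge)
    have hp : (P d).real (meetOrigin (RW d).inc1 (RW d).inc2) ≤ 2 / d := by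
      have : c₃ / (d : ℝ) ^ 2 ≤ 1 / d := by
        rw [div_le_div_iff₀ (by positivity) (by positivity)]; nlinarith
      have h2 : (2 : ℝ) / d = 1 / d + 1 / d := by ring
      exact (hyp d hd).trans (by linarith)
    calc (P d).real _ ≤ 5 / d := (RW d).measureReal_meetEvent_le hd hp hxy
      _ ≤ 5 / √d := by gcongr; exact Real.sqrt_le_self_iff.2 (Or.inr hd')
      _ ≤ (√d₀ + 5) / √d := by gcongr; linarith [Real.sqrt_nonneg d₀]

/-- Assume there is a constant `c₃ > 0` such that
`ℙ_d(τ_{O,O} < ∞) ≤ 1/d + c₃/d²` for every `d ≥ 4`.  Then there exists a constant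
`c₁ > 0`, not depending on `d`, such that for every `d ≥ 4` and all `x, y ∈ ℤ₊^d` with
`x ≠ y` and `‖x‖ ≤ ‖y‖`, `ℙ_d(τ_{x,y} < ∞) ≤ c₁/√d`. -/
theorem meet_prob_le_inv_sqrt (Ω : ℕ → Type) (mΩ : ∀ d, MeasurableSpace (Ω d))
    (P : ∀ d, @Measure (Ω d) (mΩ d))
    (RW : ∀ d, RWModel (P d) d)
    (c₃ : ℝ) (hc₃ : 0 < c₃)
    (hyp : ∀ d : ℕ, 4 ≤ d →
      ((P d) (meetOrigin (RW d).inc1 (RW d).inc2)).toReal ≤ 1 / d + c₃ / (d : ℝ) ^ 2) :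
    ∃ c₁ : ℝ, 0 < c₁ ∧ ∀ d : ℕ, 4 ≤ d → ∀ x y : Fin d → ℕ, x ≠ y → nrm x ≤ nrm y →
      ((P d) (meetEvent (RW d).inc1 (RW d).inc2 x y)).toReal ≤ c₁ / Real.sqrt d :=
  meet_prob_le_inv_sqrt_general Ω mΩ P RW c₃ hyp
end
end
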